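/- arXiv:2104.15033 — 13 statements merged into one kernel-verified Lean document; each statement's English description precedes it below -/
import Mathlib

section
/- A continuous linear operator T on a separable Fréchet space X is multiply recurrent if and only if it is AP-recurrent, i.e., for every nonempty open set U and every m there exists k with U ∩ T^{-k}(U) ∩ ... ∩ T^{-mk}(U) ≠ ∅ if and only if the set of vectors x such that for every open neighborhood U of x the return set N_T(x,U) = {n : T^n x ∈ U} contains arbitrarily long arithmetic progressions is dense in X. -/
open Filter Topology

/-- A set of natural numbers contains arbitrarily long arithmetic progressions. -/
def ContainsAPs (A : Set ℕ) : Prop :=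
  ∀ m : ℕ, ∃ a k : ℕ, 1 ≤ a ∧ 1 ≤ k ∧ ∀ j ≤ m, a + j * k ∈ A

/-!
Only the dynamics of the continuous map `T` on a separable complete metrizable space matters.
If `T` is multiply recurrent, then for each basic open set `B` and each `m` the points outside
`closure B` together with those whose orbit visits `B` along an arithmetic progression of length
`m + 1` form a dense open set; by Baire, their intersection over the countable basis and all `m`
is dense, and it consists of AP-recurrent points. Conversely, if `x ∈ U` is AP-recurrent with
`T^(a + jk) x ∈ U` for `j ≤ m`, then `T^a x` witnesses multiple recurrence for `U`.
-/

section Recurrence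

variable {X : Type*}

/-- Points whose orbit visits `U` along an arithmetic progression of length `m + 1`. -/
def apVisitSet (f : X → X) (U : Set X) (m : ℕ) : Set X :=
  {x | ∃ a k : ℕ, 1 ≤ a ∧ 1 ≤ k ∧ ∀ j ≤ m, f^[a + j * k] x ∈ U}

theorem apVisitSet_mono {f : X → X} {U V : Set X} (hUV : U ⊆ V) (m : ℕ) :
    apVisitSet f U m ⊆ apVisitSet f V m := fun _ ⟨a, k, ha, hk, hap⟩ =>
  ⟨a, k, ha, hk, fun j hj => hUV (hap j hj)⟩

variable [TopologicalSpace X]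

def MultiplyRecurrent (f : X → X) : Prop :=
  ∀ U : Set X, IsOpen U → U.Nonempty → ∀ m : ℕ, ∃ k : ℕ, 1 ≤ k ∧ ∃ x ∈ U, ∀ j ≤ m, f^[j * k] x ∈ U

def IsAPRecurrentPt (f : X → X) (x : X) : Prop :=
  ∀ U : Set X, IsOpen U → x ∈ U → ContainsAPs {n : ℕ | f^[n] x ∈ U}

variable {f : X → X}

theorem MultiplyRecurrent.of_dense_setOf_isAPRecurrentPt
    (h : Dense {x | IsAPRecurrentPt f x}) : MultiplyRecurrent f := by
  intro U hU hUne m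
  obtain ⟨x, hxU, hx⟩ := h.inter_open_nonempty U hU hUne
  obtain ⟨a, k, -, hk, hap⟩ := hx U hU hxU m
  refine ⟨k, hk, f^[a] x, by simpa using hap 0 m.zero_le, fun j hj => ?_⟩
  rw [← Function.iterate_add_apply, add_comm]
  exact hap j hj

theorem isOpen_apVisitSet (hf : Continuous f) {U : Set X} (hU : IsOpen U) (m : ℕ) :
    IsOpen (apVisitSet f U m) := by
  have : apVisitSet f U m = ⋃ (a : ℕ) (_ : 1 ≤ a) (k : ℕ) (_ : 1 ≤ k),
      ⋂ j ∈ Set.Iic m, f^[a + j * k] ⁻¹' U := by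
    ext x
    simp [apVisitSet]
  rw [this]
  refine isOpen_iUnion fun a => isOpen_iUnion fun k => isOpen_iUnion fun _ =>
    isOpen_iUnion fun _ => (Set.finite_Iic m).isOpen_biInter fun j _ => ?_
  exact hU.preimage (hf.iterate _)

/-- Return times `k, 2k, …, (m + 1)k` form the progression `a + jk`, `j ≤ m`, with `a = k`. -/
theorem MultiplyRecurrent.inter_apVisitSet_nonempty (h : MultiplyRecurrent f) {U : Set X}
    (hU : IsOpen U) (hUne : U.Nonempty) (m : ℕ) : (U ∩ apVisitSet f U m).Nonempty := by
  obtain ⟨k, hk, x, hxU, hx⟩ := h U hU hUne (m + 1)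
  refine ⟨x, hxU, k, k, hk, hk, fun j hj => ?_⟩
  rw [show k + j * k = (j + 1) * k by ring]
  exact hx (j + 1) (by omega)

theorem MultiplyRecurrent.dense_compl_closure_union_apVisitSet (h : MultiplyRecurrent f)
    {B : Set X} (hB : IsOpen B) (m : ℕ) : Dense ((closure B)ᶜ ∪ apVisitSet f B m) := by
  refine dense_iff_inter_open.2 fun V hV hVne => ?_
  by_cases hVB : (V ∩ B).Nonempty
  · obtain ⟨x, hxVB, hx⟩ := h.inter_apVisitSet_nonempty (hV.inter hB) hVB m
    exact ⟨x, hxVB.1, .inr (apVisitSet_mono Set.inter_subset_right m hx)⟩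
  · obtain ⟨x, hxV⟩ := hVne
    refine ⟨x, hxV, .inl fun hx => hVB ?_⟩
    exact mem_closure_iff.1 hx V hV hxV

theorem MultiplyRecurrent.dense_setOf_isAPRecurrentPt [BaireSpace X] [SecondCountableTopology X]
    (hf : Continuous f) (h : MultiplyRecurrent f) : Dense {x | IsAPRecurrentPt f x} := by
  set 𝔅 := TopologicalSpace.countableBasis X
  have : Countable 𝔅 := (TopologicalSpace.countable_countableBasis X).to_subtype
  have hB : ∀ B : 𝔅, IsOpen (B : Set X) := fun B =>
    TopologicalSpace.isOpen_of_mem_countableBasis B.2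
  let G : 𝔅 × ℕ → Set X := fun p => (closure (p.1 : Set X))ᶜ ∪ apVisitSet f p.1 p.2
  have hG : Dense (⋂ p, G p) := dense_iInter_of_isOpen
    (fun p => isClosed_closure.isOpen_compl.union (isOpen_apVisitSet hf (hB p.1) p.2))
    (fun p => h.dense_compl_closure_union_apVisitSet (hB p.1) p.2)
  refine hG.mono ?_
  intro x hx U hU hxU m
  obtain ⟨B, hB𝔅, hxB, hBU⟩ :=
    (TopologicalSpace.isBasis_countableBasis X).exists_subset_of_mem_open hxU hU
  rcases Set.mem_iInter.1 hx (⟨B, hB𝔅⟩, m) with hc | ⟨a, k, ha, hk, hap⟩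
  · exact absurd (subset_closure hxB) hc
  · exact ⟨a, k, ha, hk, fun j hj => hBU (hap j hj)⟩

theorem multiplyRecurrent_iff_dense_setOf_isAPRecurrentPt [BaireSpace X]
    [SecondCountableTopology X] (hf : Continuous f) :
    MultiplyRecurrent f ↔ Dense {x | IsAPRecurrentPt f x} :=
  ⟨MultiplyRecurrent.dense_setOf_isAPRecurrentPt hf,
    MultiplyRecurrent.of_dense_setOf_isAPRecurrentPt⟩

end Recurrence

theorem multiplyRecurrent_iff_dense_AP_recurrent_general
    {X : Type*} [AddCommGroup X] [Module ℝ X] [UniformSpace X] [IsUniformAddGroup X]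
    [CompleteSpace X]
    [TopologicalSpace.MetrizableSpace X] [TopologicalSpace.SeparableSpace X]
    (T : X →L[ℝ] X) :
    (∀ U : Set X, IsOpen U → U.Nonempty → ∀ m : ℕ,
        ∃ k : ℕ, 1 ≤ k ∧ ∃ x ∈ U, ∀ j ≤ m, (T ^ (j * k)) x ∈ U)
    ↔ Dense {x : X | ∀ U : Set X, IsOpen U → x ∈ U →
        ContainsAPs {n : ℕ | (T ^ n) x ∈ U}} := by
  -- together with completeness this makes `X` a Baire space
  have : (uniformity X).IsCountablyGenerated := IsUniformAddGroup.uniformity_countably_generated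
  simp only [FunLike.coe_pow_eq_iterate]
  exact multiplyRecurrent_iff_dense_setOf_isAPRecurrentPt T.continuous

theorem multiplyRecurrent_iff_dense_AP_recurrent
    {X : Type*} [AddCommGroup X] [Module ℝ X] [UniformSpace X] [IsUniformAddGroup X]
    [ContinuousSMul ℝ X] [LocallyConvexSpace ℝ X] [CompleteSpace X]
    [TopologicalSpace.MetrizableSpace X] [TopologicalSpace.SeparableSpace X]
    (T : X →L[ℝ] X) :
    (∀ U : Set X, IsOpen U → U.Nonempty → ∀ m : ℕ,
        ∃ k : ℕ, 1 ≤ k ∧ ∃ x ∈ U, ∀ j ≤ m, (T ^ (j * k)) x ∈ U)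
    ↔ Dense {x : X | ∀ U : Set X, IsOpen U → x ∈ U →
        ContainsAPs {n : ℕ | (T ^ n) x ∈ U}} :=
  multiplyRecurrent_iff_dense_AP_recurrent_general T
end

section
/- A continuous linear operator T on a separable Fréchet space admits an AP-hypercyclic vector if and only if for every pair of nonempty open sets U, V and every m > 0 there exists x ∈ U such that N_T(x,V) contains an arithmetic progression of length m. -/
open Filter Topology

/-!
The sets `apReturnSet f V m` of points whose return times to `V` contain an arithmetic progression
of length `m + 1` are open when `f` is continuous, and the right-hand condition says exactly that
they are dense. Intersecting them over a countable basis gives a residual set of AP-hypercyclic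
vectors, nonempty by the Baire category theorem. Conversely, the orbit of an AP-hypercyclic vector
meets every open set, and every point of that orbit is again AP-hypercyclic.
-/

theorem ContainsAPs.mono {A B : Set ℕ} (hA : ContainsAPs A) (hAB : A ⊆ B) : ContainsAPs B :=
  fun m => (hA m).imp fun _ => Exists.imp fun _ ⟨ha, hk, hAP⟩ =>
    ⟨ha, hk, fun j hj => hAB (hAP j hj)⟩

theorem ContainsAPs.preimage_add {A : Set ℕ} (hA : ContainsAPs A) (n : ℕ) :
    ContainsAPs ((· + n) ⁻¹' A) := by
  intro m
  obtain ⟨a, k, ha, hk, hAP⟩ := hA (m + n)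
  have hnk : n ≤ n * k := Nat.le_mul_of_pos_right n hk
  refine ⟨a + n * k - n, k, by omega, hk, fun j hj => ?_⟩
  have hshift : a + n * k - n + j * k + n = a + (n + j) * k := by
    rw [add_mul]; omega
  simpa [hshift] using hAP (n + j) (by omega)

section Dynamics

open TopologicalSpace

variable {X : Type*} [TopologicalSpace X] {f : X → X} {x : X}

def IsAPHypercyclic (f : X → X) (x : X) : Prop :=
  ∀ U : Set X, IsOpen U → U.Nonempty → ContainsAPs {n | f^[n] x ∈ U}

def apReturnSet (f : X → X) (V : Set X) (m : ℕ) : Set X :=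
  {x | ∃ a k : ℕ, 1 ≤ a ∧ 1 ≤ k ∧ ∀ j ≤ m, f^[a + j * k] x ∈ V}

theorem isOpen_apReturnSet (hf : Continuous f) {V : Set X} (hV : IsOpen V) (m : ℕ) :
    IsOpen (apReturnSet f V m) := by
  refine isOpen_iff_mem_nhds.2 fun x ⟨a, k, ha, hk, hx⟩ => ?_
  have hnear : ∀ᶠ y in 𝓝 x, ∀ j ≤ m, f^[a + j * k] y ∈ V :=
    (eventually_all_finite (Set.finite_le_nat m)).2 fun j hj =>
      (hf.iterate _).continuousAt.preimage_mem_nhds (hV.mem_nhds (hx j hj))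
  filter_upwards [hnear] with y hy using ⟨a, k, ha, hk, hy⟩

theorem IsAPHypercyclic.iterate (hx : IsAPHypercyclic f x) (n : ℕ) :
    IsAPHypercyclic f (f^[n] x) := by
  intro U hU hUne
  convert (hx U hU hUne).preimage_add n using 2
  simp [Function.iterate_add_apply]

theorem IsAPHypercyclic.dense_apReturnSet (hx : IsAPHypercyclic f x) {V : Set X} (hV : IsOpen V)
    (hVne : V.Nonempty) (m : ℕ) : Dense (apReturnSet f V m) := by
  refine dense_iff_inter_open.2 fun U hU hUne => ?_
  obtain ⟨n, k, -, -, hn⟩ := hx U hU hUne 0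
  exact ⟨_, by simpa using hn 0 le_rfl, hx.iterate _ V hV hVne m⟩

theorem setOf_isAPHypercyclic_mem_residual [SecondCountableTopology X] (hf : Continuous f)
    (hdense : ∀ V : Set X, IsOpen V → V.Nonempty → ∀ m, Dense (apReturnSet f V m)) :
    {x | IsAPHypercyclic f x} ∈ residual X := by
  set B := {V ∈ countableBasis X | V.Nonempty}
  have hB : B.Countable := (countable_countableBasis X).mono fun _ hV => hV.1
  have hresidual : (⋂ V ∈ B, ⋂ m, apReturnSet f V m) ∈ residual X :=
    (countable_bInter_mem hB).2 fun V hV => countable_iInter_mem.2 fun m =>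
      residual_of_dense_open (isOpen_apReturnSet hf (isOpen_of_mem_countableBasis hV.1) m)
        (hdense V (isOpen_of_mem_countableBasis hV.1) hV.2 m)
  refine mem_of_superset hresidual fun x hx U hU ⟨u, hu⟩ => ?_
  obtain ⟨V, hVB, huV, hVU⟩ := (isBasis_countableBasis X).exists_subset_of_mem_open hu hU
  have hxV : ContainsAPs {n | f^[n] x ∈ V} :=
    Set.mem_iInter.1 (Set.mem_iInter₂.1 hx V ⟨hVB, u, huV⟩)
  exact hxV.mono fun _ hn => hVU hn

theorem exists_isAPHypercyclic_iff [BaireSpace X] [SecondCountableTopology X] [Nonempty X]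
    (hf : Continuous f) :
    (∃ x, IsAPHypercyclic f x) ↔
      ∀ V : Set X, IsOpen V → V.Nonempty → ∀ m, Dense (apReturnSet f V m) :=
  ⟨fun ⟨_, hx⟩ _ hV hVne m => hx.dense_apReturnSet hV hVne m,
    fun hdense => (dense_of_mem_residual (setOf_isAPHypercyclic_mem_residual hf hdense)).nonempty⟩

end Dynamics

theorem exists_AP_hypercyclic_iff_general
    {X : Type*} [AddCommGroup X] [Module ℝ X] [UniformSpace X] [IsUniformAddGroup X]
    [CompleteSpace X]
    [TopologicalSpace.MetrizableSpace X] [TopologicalSpace.SeparableSpace X]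
    (T : X →L[ℝ] X) :
    (∃ x : X, ∀ U : Set X, IsOpen U → U.Nonempty →
        ContainsAPs {n : ℕ | (T ^ n) x ∈ U})
    ↔ (∀ U V : Set X, IsOpen U → U.Nonempty → IsOpen V → V.Nonempty →
        ∀ m : ℕ, 0 < m → ∃ x ∈ U, ∃ a k : ℕ, 1 ≤ a ∧ 1 ≤ k ∧
          ∀ j < m, (T ^ (a + j * k)) x ∈ V) := by
  have : (uniformity X).IsCountablyGenerated := IsUniformAddGroup.uniformity_countably_generated
  have : Nonempty X := ⟨0⟩
  simp only [FunLike.coe_pow_eq_iterate]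
  refine (exists_isAPHypercyclic_iff T.continuous).trans ⟨fun h U V hU hUne hV hVne m hm => ?_,
    fun h V hV hVne m => dense_iff_inter_open.2 fun U hU hUne => ?_⟩
  · obtain ⟨x, hxU, a, k, ha, hk, hAP⟩ := (h V hV hVne (m - 1)).inter_open_nonempty U hU hUne
    exact ⟨x, hxU, a, k, ha, hk, fun j hj => hAP j (by omega)⟩
  · obtain ⟨x, hxU, a, k, ha, hk, hAP⟩ := h U V hU hUne hV hVne (m + 1) m.succ_pos
    exact ⟨x, hxU, a, k, ha, hk, fun j hj => hAP j (Nat.lt_succ_of_le hj)⟩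

theorem exists_AP_hypercyclic_iff
    {X : Type*} [AddCommGroup X] [Module ℝ X] [UniformSpace X] [IsUniformAddGroup X]
    [ContinuousSMul ℝ X] [LocallyConvexSpace ℝ X] [CompleteSpace X]
    [TopologicalSpace.MetrizableSpace X] [TopologicalSpace.SeparableSpace X]
    (T : X →L[ℝ] X) :
    (∃ x : X, ∀ U : Set X, IsOpen U → U.Nonempty →
        ContainsAPs {n : ℕ | (T ^ n) x ∈ U})
    ↔ (∀ U V : Set X, IsOpen U → U.Nonempty → IsOpen V → V.Nonempty →
        ∀ m : ℕ, 0 < m → ∃ x ∈ U, ∃ a k : ℕ, 1 ≤ a ∧ 1 ≤ k ∧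
          ∀ j < m, (T ^ (a + j * k)) x ∈ V) :=
  exists_AP_hypercyclic_iff_general T
end

section
/- If T is a multiply recurrent continuous linear operator on a Fréchet space, then for every nonempty open set U there exists a vector x ∈ U which is AP-recurrent, i.e., for every open neighborhood V of x, N_T(x,V) contains arbitrarily long arithmetic progressions. -/
open Filter Topology

theorem multiplyRecurrent_implies_AP_recurrent_vectors_dense
    {X : Type*} [AddCommGroup X] [Module ℝ X] [UniformSpace X] [IsUniformAddGroup X]
    [ContinuousSMul ℝ X] [LocallyConvexSpace ℝ X] [CompleteSpace X]
    [TopologicalSpace.MetrizableSpace X]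
    (T : X →L[ℝ] X)
    (hmr : ∀ U : Set X, IsOpen U → U.Nonempty → ∀ m : ℕ,
        ∃ k : ℕ, 1 ≤ k ∧ ∃ x ∈ U, ∀ j ≤ m, (T ^ (j * k)) x ∈ U) :
    ∀ U : Set X, IsOpen U → U.Nonempty → ∃ x ∈ U,
      ∀ V : Set X, IsOpen V → x ∈ V → ContainsAPs {n : ℕ | (T ^ n) x ∈ V} := by
  intro U hU hUne
  haveI : (uniformity X).IsCountablyGenerated := by
    rw [uniformity_eq_comap_nhds_zero X]; infer_instance
  letI : PseudoMetricSpace X := UniformSpace.pseudoMetricSpace X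
  set E : ℕ → ℕ → Set X := fun m q =>
    {x | ∃ a k : ℕ, 1 ≤ a ∧ 1 ≤ k ∧
      ∀ j ≤ m, dist ((T ^ (a + j * k)) x) x < 1 / ((q : ℝ) + 1)} with hE
  have hEopen : ∀ m q, IsOpen (E m q) := by
    intro m q
    have : E m q = ⋃ (a : ℕ) (k : ℕ) (_ : 1 ≤ a) (_ : 1 ≤ k),
        ⋂ j ∈ Set.Iic m, {x | dist ((T ^ (a + j * k)) x) x < 1 / ((q : ℝ) + 1)} := by
      ext x
      simp only [hE, Set.mem_setOf_eq, Set.mem_iUnion, Set.mem_iInter, Set.mem_Iic,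
        Set.mem_setOf_eq]
      constructor
      · rintro ⟨a, k, ha, hk, h⟩; exact ⟨a, k, ha, hk, h⟩
      · rintro ⟨a, k, ha, hk, h⟩; exact ⟨a, k, ha, hk, h⟩
    rw [this]
    refine isOpen_iUnion fun a => isOpen_iUnion fun k => isOpen_iUnion fun _ =>
      isOpen_iUnion fun _ => (Set.finite_Iic m).isOpen_biInter fun j _ => ?_
    exact isOpen_lt (Continuous.dist ((T ^ (a + j * k)).continuous) continuous_id)
      continuous_const
  have hEdense : ∀ m q, Dense (E m q) := by
    intro m q
    rw [dense_iff_inter_open]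
    rintro W hW ⟨y, hy⟩
    obtain ⟨r, hr, hball⟩ := Metric.isOpen_iff.1 hW y hy
    have hq1 : (0 : ℝ) < 1 / (2 * ((q : ℝ) + 1)) := by positivity
    set δ : ℝ := min (r / 2) (1 / (2 * ((q : ℝ) + 1))) with hδdef
    have hδ : 0 < δ := lt_min (by linarith) hq1
    obtain ⟨k, hk, x, hx, hxj⟩ := hmr (Metric.ball y δ) Metric.isOpen_ball
      ⟨y, Metric.mem_ball_self hδ⟩ (m + 1)
    refine ⟨x, ?_, k, k, hk, hk, ?_⟩
    · apply hball
      have : δ ≤ r / 2 := min_le_left _ _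
      have hxy : dist x y < δ := hx
      exact Metric.mem_ball.2 (by linarith)
    · intro j hj
      have h1 : (T ^ ((j + 1) * k)) x ∈ Metric.ball y δ := hxj (j + 1) (by omega)
      have heq : k + j * k = (j + 1) * k := by ring
      rw [heq]
      have hd1 : dist ((T ^ ((j + 1) * k)) x) y < δ := h1
      have hd2 : dist x y < δ := hx
      have htri : dist ((T ^ ((j + 1) * k)) x) x ≤
          dist ((T ^ ((j + 1) * k)) x) y + dist y x := dist_triangle _ _ _
      have hyx : dist y x = dist x y := dist_comm _ _
      have hδ2 : δ ≤ 1 / (2 * ((q : ℝ) + 1)) := min_le_right _ _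
      have : (2 : ℝ) * (1 / (2 * ((q : ℝ) + 1))) = 1 / ((q : ℝ) + 1) := by
        field_simp
      calc dist ((T ^ ((j + 1) * k)) x) x ≤ dist ((T ^ ((j + 1) * k)) x) y + dist y x := htri
        _ < δ + δ := by rw [hyx]; linarith
        _ ≤ 1 / ((q : ℝ) + 1) := by linarith
  have hG : Dense (⋂ p : ℕ × ℕ, E p.1 p.2) :=
    dense_iInter_of_isOpen (fun p => hEopen p.1 p.2) (fun p => hEdense p.1 p.2)
  obtain ⟨x, hxG, hxU⟩ := hG.exists_mem_open hU hUne
  refine ⟨x, hxU, ?_⟩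
  intro V hV hxV m
  obtain ⟨ε, hε, hballV⟩ := Metric.isOpen_iff.1 hV x hxV
  obtain ⟨q, hq⟩ := exists_nat_one_div_lt hε
  obtain ⟨a, k, ha, hk, h⟩ := Set.mem_iInter.1 hxG (m, q)
  exact ⟨a, k, ha, hk, fun j hj =>
    hballV (Metric.mem_ball.2 (lt_trans (h j hj) hq))⟩
end

section
/- Let (x_n) be a sequence in a topological vector space and let (n_k) be a set of natural numbers with the property: for all p, m ∈ ℕ there exists q ∈ ℕ such that {p + q, p + 2q, ..., p + mq} ⊆ (n_k). Assume x_{n_k - j} → 0 as k → ∞ for every j ≥ 0. Then there exists a set (m_k) of natural numbers which contains, for every m, an arithmetic progression of the form {q, 2q, ..., mq}, and such that x_{m_k + j} → 0 as k → ∞ for every j ≥ 0. -/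
/-!
For every `m` choose a step `q m` so large that `m + j * q m ∈ range n` for `1 ≤ j ≤ m`, and all
these points lie beyond the bound past which `x (s - r)`, for `s ∈ range n` and `r ≤ m`, stays in
the `m`-th basic neighbourhood of `0`. The set of all `j * q m` with `1 ≤ j ≤ m` contains the required progressions,
and `x (j * q m + t) = x ((m + j * q m) - (m - t))` lies in that neighbourhood as soon as `t ≤ m`.
Enumerating this set increasingly gives `m'`.
-/

open Filter Topology

open Set in
theorem Filter.Tendsto.cofinite_inf_principal_range {α β γ : Type*} {f : α → β} {g : β → γ}
    {l : Filter γ} (h : Tendsto (g ∘ f) cofinite l) : Tendsto g (cofinite ⊓ 𝓟 (range f)) l := by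
  intro U hU
  rw [mem_map, mem_inf_principal, mem_cofinite]
  refine (mem_cofinite.1 (h hU)).image f |>.subset ?_
  intro b hb
  obtain ⟨⟨i, rfl⟩, hi⟩ := Classical.not_imp.1 hb
  exact ⟨i, hi, rfl⟩

theorem exists_ap_step_gt {S : Set ℕ} {p : ℕ}
    (hS : ∀ m, ∃ q, 1 ≤ q ∧ ∀ j, 1 ≤ j → j ≤ m → p + j * q ∈ S) (m B : ℕ) :
    ∃ q, B < q ∧ ∀ j, 1 ≤ j → j ≤ m → p + j * q ∈ S := by
  obtain ⟨q, hq, hmem⟩ := hS (m * (B + 1))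
  refine ⟨(B + 1) * q, by nlinarith, fun j hj₁ hj₂ => ?_⟩
  -- the progression of step `(B + 1) * q` is every `(B + 1)`-th term of the one of step `q`
  simpa only [mul_assoc] using hmem (j * (B + 1)) (by nlinarith) (Nat.mul_le_mul_right _ hj₂)

theorem eventually_forall_mul_lt (q : ℕ → ℕ) (N : ℕ) :
    ∀ᶠ s in atTop, ∀ m < N, ∀ j ≤ m, j * q m < s := by
  filter_upwards [eventually_gt_atTop (∑ m ∈ Finset.range N, m * q m)] with s hs m hm j hj
  calc j * q m ≤ m * q m := Nat.mul_le_mul_right _ hj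
    _ ≤ ∑ m ∈ Finset.range N, m * q m :=
      Finset.single_le_sum (f := fun m => m * q m) (fun _ _ => Nat.zero_le _) (Finset.mem_range.2 hm)
    _ < s := hs

theorem exists_forall_ap_tendsto_add {α : Type*} {l : Filter α} [l.IsCountablyGenerated]
    {x : ℕ → α} {S : Set ℕ}
    (hS : ∀ p m, ∃ q, 1 ≤ q ∧ ∀ j, 1 ≤ j → j ≤ m → p + j * q ∈ S)
    (hx : ∀ t, Tendsto (fun s => x (s - t)) (atTop ⊓ 𝓟 S) l) :
    ∃ T : Set ℕ, (∀ m, ∃ q, 1 ≤ q ∧ ∀ j, 1 ≤ j → j ≤ m → j * q ∈ T) ∧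
      ∀ t, Tendsto (fun s => x (s + t)) (atTop ⊓ 𝓟 T) l := by
  obtain ⟨U, hU⟩ := l.exists_antitone_basis
  have hbound : ∀ m, ∃ B, ∀ s ≥ B, s ∈ S → ∀ r ≤ m, x (s - r) ∈ U m := fun m =>
    eventually_atTop.1 <| eventually_inf_principal.1 <|
      (eventually_all_finite (Set.finite_Iic m)).2 fun r _ => hx r (hU.mem m)
  choose B hB using hbound
  choose q hqB hqS using fun m => exists_ap_step_gt (hS m) m (B m)
  refine ⟨{s | ∃ m j, 1 ≤ j ∧ j ≤ m ∧ s = j * q m},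
    fun m => ⟨q m, Nat.one_le_of_lt (hqB m), fun j hj₁ hj₂ => ⟨m, j, hj₁, hj₂, rfl⟩⟩, fun t => ?_⟩
  refine hU.tendsto_right_iff.2 fun N _ => eventually_inf_principal.2 ?_
  filter_upwards [eventually_forall_mul_lt q (max N t)] with s hs hsT
  obtain ⟨m, j, hj₁, hj₂, rfl⟩ := hsT
  have hm : max N t ≤ m := not_lt.1 fun h => lt_irrefl _ (hs m h j hj₂)
  have hmem := hB m (m + j * q m) (by nlinarith [hqB m]) (hqS m j hj₁ hj₂) (m - t) (Nat.sub_le _ _)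
  rw [show m + j * q m - (m - t) = j * q m + t by omega] at hmem
  exact hU.antitone (le_of_max_le_left hm) hmem

theorem lemma_sucesion_alap_general
    {X : Type*} [AddCommGroup X] [TopologicalSpace X]
    [TopologicalSpace.MetrizableSpace X]
    (x : ℕ → X) (n : ℕ → ℕ)
    (hAP : ∀ p m : ℕ, ∃ q : ℕ, 1 ≤ q ∧
        ∀ j : ℕ, 1 ≤ j → j ≤ m → p + j * q ∈ Set.range n)
    (hconv : ∀ j : ℕ, Tendsto (fun k : ℕ => x (n k - j)) atTop (𝓝 0)) :
    ∃ m' : ℕ → ℕ, StrictMono m' ∧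
      (∀ m : ℕ, ∃ q : ℕ, 1 ≤ q ∧ ∀ j : ℕ, 1 ≤ j → j ≤ m → j * q ∈ Set.range m') ∧
      ∀ j : ℕ, Tendsto (fun k : ℕ => x (m' k + j)) atTop (𝓝 0) := by
  have hconv_range (j : ℕ) : Tendsto (fun s => x (s - j)) (atTop ⊓ 𝓟 (Set.range n)) (𝓝 0) := by
    rw [← Nat.cofinite_eq_atTop] at hconv ⊢
    exact (hconv j).cofinite_inf_principal_range (g := fun s => x (s - j))
  obtain ⟨T, hTap, hT⟩ := exists_forall_ap_tendsto_add hAP hconv_range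
  have hTinf : T.Infinite := Set.infinite_of_not_bddAbove fun ⟨b, hb⟩ => by
    obtain ⟨q, hq, hmem⟩ := hTap (b + 1)
    have := hb (hmem (b + 1) (by omega) le_rfl)
    nlinarith
  have hnth : Tendsto (Nat.nth (· ∈ T)) atTop (atTop ⊓ 𝓟 T) :=
    tendsto_inf.2 ⟨(Nat.nth_strictMono hTinf).tendsto_atTop,
      tendsto_principal.2 (Eventually.of_forall (Nat.nth_mem_of_infinite hTinf))⟩
  refine ⟨Nat.nth (· ∈ T), Nat.nth_strictMono hTinf, ?_, fun j => (hT j).comp hnth⟩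
  rwa [Nat.range_nth_of_infinite (p := (· ∈ T)) hTinf]

theorem lemma_sucesion_alap
    {X : Type*} [AddCommGroup X] [Module ℝ X] [TopologicalSpace X]
    [IsTopologicalAddGroup X] [ContinuousSMul ℝ X] [TopologicalSpace.MetrizableSpace X]
    (x : ℕ → X) (n : ℕ → ℕ) (hn : StrictMono n)
    (hAP : ∀ p m : ℕ, ∃ q : ℕ, 1 ≤ q ∧
        ∀ j : ℕ, 1 ≤ j → j ≤ m → p + j * q ∈ Set.range n)
    (hconv : ∀ j : ℕ, Tendsto (fun k : ℕ => x (n k - j)) atTop (𝓝 0)) :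
    ∃ m' : ℕ → ℕ, StrictMono m' ∧
      (∀ m : ℕ, ∃ q : ℕ, 1 ≤ q ∧ ∀ j : ℕ, 1 ≤ j → j ≤ m → j * q ∈ Set.range m') ∧
      ∀ j : ℕ, Tendsto (fun k : ℕ => x (m' k + j)) atTop (𝓝 0) :=
  lemma_sucesion_alap_general x n hAP hconv
end

section
/- Let X be a separable Fréchet space with Schauder basis (e_n) on which the backward shift B(e_{n+1}) = e_n, B(e_0) = 0 is well defined and continuous. If B is multiply recurrent, then for every ε > 0 and every p, m ∈ ℕ there exists q ≥ 1 such that ‖e_{jq + p}‖ < ε for every 1 ≤ j ≤ m. -/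
open Filter Topology
open scoped Uniformity Pointwise

theorem backward_shift_multiplyRecurrent_basis_smallness
    {X : Type*} [AddCommGroup X] [Module ℝ X] [UniformSpace X] [IsUniformAddGroup X]
    [ContinuousSMul ℝ X] [LocallyConvexSpace ℝ X] [CompleteSpace X]
    [TopologicalSpace.MetrizableSpace X] [TopologicalSpace.SeparableSpace X]
    (e : ℕ → X) (coord : ℕ → X →L[ℝ] ℝ)
    (hbasis : ∀ x : X,
      Tendsto (fun N : ℕ => ∑ n ∈ Finset.range N, coord n x • e n) atTop (𝓝 x))
    (hcoord : ∀ n m : ℕ, coord n (e m) = if n = m then 1 else 0)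
    (B : X →L[ℝ] X) (hB : ∀ n : ℕ, B (e (n + 1)) = e n) (hB0 : B (e 0) = 0)
    (hmr : ∀ U : Set X, IsOpen U → U.Nonempty → ∀ m : ℕ,
        ∃ k : ℕ, 1 ≤ k ∧ ∃ x ∈ U, ∀ j ≤ m, (B ^ (j * k)) x ∈ U) :
    ∀ W ∈ 𝓝 (0 : X), ∀ p m : ℕ, ∃ q : ℕ, 1 ≤ q ∧
      ∀ j : ℕ, 1 ≤ j → j ≤ m → e (j * q + p) ∈ W := by
  haveI : (𝓤 X).IsCountablyGenerated := IsUniformAddGroup.uniformity_countably_generated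
  -- The single-term projections `Q n x = coord n x • e n`.
  set Q : ℕ → X →L[ℝ] X := fun n => (coord n).smulRight (e n) with hQdef
  have hQ : ∀ n x, Q n x = coord n x • e n := fun n x => rfl
  -- Pointwise convergence of `Q n x` to `0`.
  have h0 : ∀ x : X, Tendsto (fun n => Q n x) atTop (𝓝 0) := by
    intro x
    have h1 : Tendsto (fun N : ℕ => ∑ n ∈ Finset.range (N + 1), coord n x • e n)
        atTop (𝓝 x) := (hbasis x).comp (tendsto_add_atTop_nat 1)
    have h2 := hbasis x
    have h3 := h1.sub h2
    simp only [sub_self] at h3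
    convert h3 using 2 with n
    rw [hQ, Finset.sum_range_succ]
    abel
  -- Banach–Steinhaus: the `Q n` are uniformly equicontinuous.
  have hq : WithSeminorms (gaugeSeminormFamily ℝ X) := with_gaugeSeminormFamily
  have hEq : UniformEquicontinuous ((↑) ∘ Q) := by
    refine hq.banach_steinhaus fun k x => ?_
    exact (((hq.continuous_seminorm k).tendsto 0).comp (h0 x)).bddAbove_range
  -- Two continuous linear functionals agreeing on the basis agree everywhere.
  have key : ∀ f g : X →L[ℝ] ℝ, (∀ n, f (e n) = g (e n)) → ∀ x, f x = g x := by
    intro f g h x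
    have h1 : Tendsto (fun N : ℕ => f (∑ n ∈ Finset.range N, coord n x • e n))
        atTop (𝓝 (f x)) := (f.continuous.tendsto x).comp (hbasis x)
    have h2 : Tendsto (fun N : ℕ => g (∑ n ∈ Finset.range N, coord n x • e n))
        atTop (𝓝 (g x)) := (g.continuous.tendsto x).comp (hbasis x)
    have heq : ∀ N : ℕ, f (∑ n ∈ Finset.range N, coord n x • e n)
        = g (∑ n ∈ Finset.range N, coord n x • e n) := by
      intro N
      simp only [map_sum, map_smul, h]
    rw [funext heq] at h1
    exact tendsto_nhds_unique h1 h2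
  -- Action of powers of `B` on the basis.
  have hBpow : ∀ s n : ℕ, (B ^ s) (e n) = if s ≤ n then e (n - s) else 0 := by
    intro s
    induction s with
    | zero => intro n; simp
    | succ s ih =>
      intro n
      have : (B ^ (s + 1)) (e n) = (B ^ s) (B (e n)) := by
        rw [pow_succ]; rfl
      rw [this]
      cases n with
      | zero => rw [hB0, map_zero]; simp
      | succ n =>
        rw [hB n, ih n]
        by_cases h : s ≤ n
        · rw [if_pos h, if_pos (by omega)]
          congr 1; omega
        · rw [if_neg h, if_neg (by omega)]
  -- Coordinates of `B ^ s x`.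
  have coordB : ∀ (p s : ℕ) (x : X), coord p ((B ^ s) x) = coord (s + p) x := by
    intro p s x
    have := key ((coord p).comp (B ^ s)) (coord (s + p)) ?_ x
    · simpa using this
    · intro n
      simp only [ContinuousLinearMap.comp_apply, hBpow s n, hcoord]
      by_cases h : s ≤ n
      · rw [if_pos h, hcoord]
        by_cases h2 : p = n - s
        · rw [if_pos h2, if_pos (by omega)]
        · rw [if_neg h2, if_neg (by omega)]
      · rw [if_neg h, map_zero, if_neg (by omega)]
  intro W hW p m
  -- Extract a balanced neighborhood inside `W`.
  obtain ⟨W'', ⟨hW''mem, hW''bal⟩, hW''sub⟩ := (nhds_basis_balanced ℝ X).mem_iff.mp hW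
  -- `W' = 2⁻¹ • W''` is also a neighborhood of `0`.
  set W' : Set X := (2⁻¹ : ℝ) • W'' with hW'def
  have hW' : W' ∈ 𝓝 (0 : X) := by
    have := (smul_mem_nhds_smul_iff₀ (c := (2⁻¹ : ℝ)) (by norm_num)
      (s := W'') (x := (0 : X))).mpr hW''mem
    rwa [smul_zero] at this
  -- Equicontinuity gives a neighborhood `V` of `0` on which all `Q n` land in `W'`.
  have hV : {v : X | ∀ n, Q n v ∈ W'} ∈ 𝓝 (0 : X) := by
    have hU0 : {ab : X × X | ab.2 - ab.1 ∈ W'} ∈ 𝓤 X := by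
      rw [uniformity_eq_comap_nhds_zero]
      exact Filter.preimage_mem_comap hW'
    have h3 : Prod.mk (0 : X) ⁻¹' {xy : X × X | ∀ i, Q i xy.2 - Q i xy.1 ∈ W'}
        ∈ Filter.comap (Prod.mk (0 : X)) (𝓤 X) :=
      Filter.preimage_mem_comap (hEq _ hU0)
    rw [← nhds_eq_comap_uniformity] at h3
    refine Filter.mem_of_superset h3 ?_
    intro v hv n
    have := hv n
    simpa [map_zero] using this
  set Vi : Set X := interior {v : X | ∀ n, Q n v ∈ W'} with hVidef
  have hVi : Vi ∈ 𝓝 (0 : X) := interior_mem_nhds.mpr hV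
  -- The open set used for multiple recurrence.
  set U0 : Set X := {y : X | y - e p ∈ Vi ∧ |coord p y - 1| < 2⁻¹} with hU0def
  have hU0open : IsOpen U0 := by
    have h1 : IsOpen {y : X | y - e p ∈ Vi} :=
      isOpen_interior.preimage (continuous_id.sub continuous_const)
    have h2 : IsOpen {y : X | |coord p y - 1| < 2⁻¹} := by
      have : Continuous fun y : X => |coord p y - 1| :=
        ((coord p).continuous.sub continuous_const).abs
      exact isOpen_Iio.preimage this
    exact h1.inter h2
  have hU0ne : U0.Nonempty := by
    refine ⟨e p, ?_, ?_⟩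
    · rw [sub_self]; exact mem_of_mem_nhds hVi
    · rw [hcoord, if_pos rfl]; norm_num
  obtain ⟨k, hk1, x, hxU, hallj⟩ := hmr U0 hU0open hU0ne m
  refine ⟨k, hk1, fun j hj1 hjm => ?_⟩
  set n := j * k + p with hn
  set c : ℝ := coord n x with hc
  -- `c` is close to `1`.
  have hcnear : |c - 1| < 2⁻¹ := by
    have h2 := (hallj j hjm).2
    rwa [coordB p (j * k) x] at h2
  have hcpos : (2⁻¹ : ℝ) < c := by
    have := abs_lt.mp hcnear
    linarith [this.1]
  have hcne : c ≠ 0 := by positivity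
  -- `c • e n ∈ W'`.
  have hmem : c • e n ∈ W' := by
    have hx1 : x - e p ∈ Vi := hxU.1
    have hx2 : ∀ i, Q i (x - e p) ∈ W' := interior_subset hx1
    have := hx2 n
    rw [hQ, map_sub (coord n), hcoord, if_neg
      (by have := Nat.mul_pos (show 0 < j by omega) (show 0 < k by omega); omega),
      sub_zero] at this
    exact this
  -- Conclude using balancedness.
  obtain ⟨w, hw, hweq⟩ := hmem
  have hen : e n = (c⁻¹ * 2⁻¹) • w := by
    have h5 : c⁻¹ • ((2⁻¹ : ℝ) • w) = c⁻¹ • (c • e n) := by rw [show (2⁻¹ : ℝ) • w = c • e n from hweq]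
    rw [inv_smul_smul₀ hcne, smul_smul] at h5
    exact h5.symm
  have habs : ‖(c⁻¹ * 2⁻¹ : ℝ)‖ ≤ 1 := by
    rw [Real.norm_eq_abs, abs_mul, abs_inv]
    rw [abs_of_pos (by linarith : (0:ℝ) < c), abs_of_pos (by norm_num : (0:ℝ) < 2⁻¹)]
    have h1 : c⁻¹ ≤ ((2:ℝ)⁻¹)⁻¹ := by
      apply inv_anti₀ <;> [norm_num; linarith]
    rw [inv_inv] at h1
    nlinarith
  apply hW''sub
  rw [hen]
  exact hW''bal _ habs (Set.smul_mem_smul_set hw)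
end

section
/- Let X be a separable Fréchet space with Schauder basis (e_n) supporting a continuous backward shift B. If there is a sequence (n_k) with e_{n_k} → 0 having the property that for all p, m there is q with {p+q, p+2q, ..., p+mq} ⊆ (n_k), then B is AP-hypercyclic. -/
open Filter Topology Uniformity

lemma sum_small_aux {X : Type*} [AddCommGroup X] [TopologicalSpace X]
    [IsTopologicalAddGroup X] :
    ∀ (M : ℕ) (W : Set X), W ∈ 𝓝 (0 : X) →
      ∃ V₀ ∈ 𝓝 (0 : X), ∀ (s : Finset (ℕ × ℕ)) (f : ℕ × ℕ → X),
        s.card ≤ M → (∀ i ∈ s, f i ∈ V₀) → ∑ i ∈ s, f i ∈ W := by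
  intro M
  induction M with
  | zero =>
    intro W hW
    refine ⟨W, hW, fun s f hc hf => ?_⟩
    have : s = ∅ := Finset.card_eq_zero.1 (Nat.le_zero.1 hc)
    simp [this, mem_of_mem_nhds hW]
  | succ M ih =>
    intro W hW
    obtain ⟨W₁, hW₁, hadd⟩ := exists_nhds_zero_half hW
    obtain ⟨V₀, hV₀, hsum⟩ := ih W₁ hW₁
    refine ⟨V₀ ∩ W₁, Filter.inter_mem hV₀ hW₁, fun s f hc hf => ?_⟩
    rcases s.eq_empty_or_nonempty with rfl | ⟨i₀, hi₀⟩
    · simp [mem_of_mem_nhds hW]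
    · rw [← Finset.insert_erase hi₀, Finset.sum_insert (Finset.notMem_erase _ _)]
      refine hadd _ (hf i₀ hi₀).2 _ (hsum _ _ ?_ fun i hi => (hf i (Finset.mem_of_mem_erase hi)).1)
      have := Finset.card_erase_of_mem hi₀
      omega

theorem backward_shift_AP_hypercyclic_of_basis_condition
    {X : Type*} [AddCommGroup X] [Module ℝ X] [UniformSpace X] [IsUniformAddGroup X]
    [ContinuousSMul ℝ X] [LocallyConvexSpace ℝ X] [CompleteSpace X]
    [TopologicalSpace.MetrizableSpace X] [TopologicalSpace.SeparableSpace X]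
    (e : ℕ → X) (coord : ℕ → X →L[ℝ] ℝ)
    (hbasis : ∀ x : X,
      Tendsto (fun N : ℕ => ∑ n ∈ Finset.range N, coord n x • e n) atTop (𝓝 x))
    (hcoord : ∀ n m : ℕ, coord n (e m) = if n = m then 1 else 0)
    (B : X →L[ℝ] X) (hB : ∀ n : ℕ, B (e (n + 1)) = e n) (hB0 : B (e 0) = 0)
    (n : ℕ → ℕ) (hmono : StrictMono n)
    (hconv : Tendsto (fun k : ℕ => e (n k)) atTop (𝓝 0))
    (hAP : ∀ p m : ℕ, ∃ q : ℕ, 1 ≤ q ∧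
        ∀ j : ℕ, 1 ≤ j → j ≤ m → p + j * q ∈ Set.range n) :
    ∃ x : X, ∀ U : Set X, IsOpen U → U.Nonempty →
        ContainsAPs {n' : ℕ | (B ^ n') x ∈ U} := by
  classical
  haveI : (𝓤 X).IsCountablyGenerated := IsUniformAddGroup.uniformity_countably_generated
  haveI : SecondCountableTopology X :=
    UniformSpace.secondCountable_of_separable X
  -- basic computation of powers of B on basis vectors
  have hpow : ∀ P t : ℕ, (B ^ P) (e t) = if P ≤ t then e (t - P) else 0 := by
    intro P
    induction P with
    | zero => intro t; simp
    | succ P ih =>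
      intro t
      rw [pow_succ, ContinuousLinearMap.mul_apply]
      cases t with
      | zero => rw [hB0, map_zero]; simp
      | succ s =>
        rw [hB s, ih s]
        simp [Nat.succ_le_succ_iff, Nat.succ_sub_succ]
  -- the key density / transitivity construction
  have key : ∀ (U V : Set X), IsOpen U → U.Nonempty → IsOpen V → V.Nonempty →
      ∀ m : ℕ, ∃ x ∈ U, ∃ Q : ℕ, 1 ≤ Q ∧
        ∀ j : ℕ, 1 ≤ j → j ≤ m → (B ^ (j * Q)) x ∈ V := by
    intro U V hU hUne hV hVne m
    obtain ⟨x₀, hx₀⟩ := hUne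
    obtain ⟨x₁, hx₁⟩ := hVne
    -- truncate x₀
    obtain ⟨N, hN1, hu⟩ : ∃ N : ℕ, 1 ≤ N ∧
        (∑ t ∈ Finset.range N, coord t x₀ • e t) ∈ U := by
      have h1 := (hbasis x₀).eventually (hU.mem_nhds hx₀)
      obtain ⟨N, hN⟩ := (h1.and (eventually_ge_atTop 1)).exists
      exact ⟨N, hN.2, hN.1⟩
    set u : X := ∑ t ∈ Finset.range N, coord t x₀ • e t with hu_def
    -- truncate x₁
    obtain ⟨d, hd1, hv⟩ : ∃ d : ℕ, 1 ≤ d ∧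
        (∑ i ∈ Finset.range d, coord i x₁ • e i) ∈ V := by
      have h1 := (hbasis x₁).eventually (hV.mem_nhds hx₁)
      obtain ⟨d, hd⟩ := (h1.and (eventually_ge_atTop 1)).exists
      exact ⟨d, hd.2, hd.1⟩
    set c : ℕ → ℝ := fun i => coord i x₁ with hc_def
    set v : X := ∑ i ∈ Finset.range d, c i • e i with hv_def
    -- neighborhoods
    have hWU : {w : X | u + w ∈ U} ∈ 𝓝 (0 : X) := by
      have : Continuous fun w : X => u + w := continuous_const.add continuous_id
      have ho : IsOpen {w : X | u + w ∈ U} := hU.preimage this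
      exact ho.mem_nhds (by simpa using hu)
    have hWV : {w : X | v + w ∈ V} ∈ 𝓝 (0 : X) := by
      have : Continuous fun w : X => v + w := continuous_const.add continuous_id
      have ho : IsOpen {w : X | v + w ∈ V} := hV.preimage this
      exact ho.mem_nhds (by simpa using hv)
    obtain ⟨V₀, hV₀, hsum⟩ := sum_small_aux ((m + 1) * d) _ (Filter.inter_mem hWU hWV)
    -- smallness of shifted basis vectors along n
    obtain ⟨K, hK⟩ : ∃ K : ℕ, ∀ k ≥ K, ∀ i < d,
        c i • (B ^ (d - 1 - i)) (e (n k)) ∈ V₀ := by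
      have hev : ∀ᶠ k in atTop, ∀ i ∈ Finset.range d,
          c i • (B ^ (d - 1 - i)) (e (n k)) ∈ V₀ := by
        rw [eventually_all_finset]
        intro i _
        have h1 : Tendsto (fun k => (B ^ (d - 1 - i)) (e (n k))) atTop (𝓝 0) := by
          have := ((B ^ (d - 1 - i)).continuous.tendsto 0).comp hconv
          simpa [Function.comp_def] using this
        have h2 : Tendsto (fun k => c i • (B ^ (d - 1 - i)) (e (n k))) atTop (𝓝 0) := by
          simpa using h1.const_smul (c i)
        exact h2.eventually_mem hV₀
      obtain ⟨K, hK⟩ := eventually_atTop.1 hev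
      exact ⟨K, fun k hk i hi => hK k hk i (Finset.mem_range.2 hi)⟩
    -- choose T and the progression
    set T : ℕ := max (max N d) (n K) + 1 with hT_def
    have hT1 : 1 ≤ T := Nat.le_add_left 1 _
    obtain ⟨q, hq1, hq⟩ := hAP (d - 1) (m * T)
    set Q : ℕ := T * q with hQ_def
    have hQT : T ≤ Q := Nat.le_mul_of_pos_right T hq1
    have hQ1 : 1 ≤ Q := le_trans hT1 hQT
    have hNQ : N ≤ Q := le_trans (le_trans (le_max_left _ _) (le_max_left _ _)) (le_trans (Nat.le_succ _) hQT)
    have hdQ : d ≤ Q := le_trans (le_trans (le_max_right _ _) (le_max_left _ _)) (le_trans (Nat.le_succ _) hQT)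
    have hnKQ : n K < Q := lt_of_lt_of_le (Nat.lt_succ_of_le (le_max_right _ _)) hQT
    -- the small blocks are in V₀
    have hsmall : ∀ t i : ℕ, 1 ≤ t → t ≤ m → i < d → c i • e (t * Q + i) ∈ V₀ := by
      intro t i ht1 htm hid
      obtain ⟨k, hk⟩ := hq (t * T) (le_trans ht1 (Nat.le_mul_of_pos_right t hT1))
        (Nat.mul_le_mul_right T htm)
      -- n k = (d-1) + t*T*q = (d-1) + t*Q
      have hnk : n k = (d - 1) + t * Q := by
        rw [hk, hQ_def, Nat.mul_assoc]
      have hkK : K ≤ k := by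
        have h1 : n K < n k := by
          have : Q ≤ t * Q := Nat.le_mul_of_pos_left Q ht1
          omega
        exact le_of_lt (hmono.lt_iff_lt.1 h1)
      have heq : e (t * Q + i) = (B ^ (d - 1 - i)) (e (n k)) := by
        rw [hpow]
        have hc1 : d - 1 - i ≤ n k := by omega
        rw [if_pos hc1]
        congr 1
        omega
      rw [heq]
      exact hK k hkK i hid
    -- the vector x
    set x : X := u + ∑ p ∈ (Finset.Icc 1 m) ×ˢ (Finset.range d),
        c p.2 • e (p.1 * Q + p.2) with hx_def
    have hcard : ((Finset.Icc 1 m) ×ˢ (Finset.range d)).card ≤ (m + 1) * d := by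
      rw [Finset.card_product, Nat.card_Icc, Finset.card_range]
      exact Nat.mul_le_mul_right d (by omega)
    have huzero : ∀ P : ℕ, N ≤ P → (B ^ P) u = 0 := by
      intro P hP
      rw [hu_def, map_sum]
      refine Finset.sum_eq_zero fun t ht => ?_
      rw [map_smul, hpow, if_neg (by simp at ht; omega), smul_zero]
    refine ⟨x, ?_, Q, hQ1, ?_⟩
    · -- x ∈ U
      have hw : (∑ p ∈ (Finset.Icc 1 m) ×ˢ (Finset.range d),
          c p.2 • e (p.1 * Q + p.2)) ∈ {w : X | u + w ∈ U} ∩ {w : X | v + w ∈ V} := by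
        refine hsum _ _ hcard fun p hp => ?_
        simp only [Finset.mem_product, Finset.mem_Icc, Finset.mem_range] at hp
        exact hsmall p.1 p.2 hp.1.1 hp.1.2 hp.2
      exact hw.1
    · -- images
      intro j₀ hj₀1 hj₀m
      have hP : (B ^ (j₀ * Q)) x = v + ∑ p ∈ (Finset.Icc 1 m) ×ˢ (Finset.range d),
          c p.2 • (if j₀ + 1 ≤ p.1 then e ((p.1 - j₀) * Q + p.2) else 0) := by
        rw [hx_def, map_add, huzero _ (le_trans hNQ (Nat.le_mul_of_pos_left Q hj₀1)),
          zero_add, map_sum]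
        have hterm : ∀ p ∈ (Finset.Icc 1 m) ×ˢ (Finset.range d),
            (B ^ (j₀ * Q)) (c p.2 • e (p.1 * Q + p.2)) =
              (if p.1 = j₀ then c p.2 • e p.2 else 0) +
              c p.2 • (if j₀ + 1 ≤ p.1 then e ((p.1 - j₀) * Q + p.2) else 0) := by
          intro p hp
          simp only [Finset.mem_product, Finset.mem_Icc, Finset.mem_range] at hp
          obtain ⟨⟨hp1, hpm⟩, hpd⟩ := hp
          rw [map_smul, hpow]
          rcases lt_trichotomy p.1 j₀ with h | h | h
          · rw [if_neg, if_neg (by omega), if_neg (by omega)]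
            · simp
            · -- p.1 * Q + p.2 < j₀ * Q
              have h1 : p.1 * Q + Q ≤ j₀ * Q := by
                calc p.1 * Q + Q = (p.1 + 1) * Q := by ring
                _ ≤ j₀ * Q := Nat.mul_le_mul_right Q (by omega)
              omega
          · rw [if_pos, if_pos h, if_neg (by omega)]
            · rw [h]; simp
            · rw [h]; omega
          · have hle : j₀ * Q ≤ p.1 * Q := Nat.mul_le_mul_right Q (le_of_lt h)
            rw [if_pos (by omega), if_neg (by omega), if_pos (by omega)]
            have : p.1 * Q + p.2 - j₀ * Q = (p.1 - j₀) * Q + p.2 := by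
              have h2 : (p.1 - j₀) * Q = p.1 * Q - j₀ * Q := Nat.sub_mul p.1 j₀ Q
              omega
            rw [this, zero_add]
        rw [Finset.sum_congr rfl hterm, Finset.sum_add_distrib]
        congr 1
        -- the indicator sum equals v
        rw [hv_def]
        rw [Finset.sum_product]
        have : ∀ j ∈ Finset.Icc 1 m, (∑ i ∈ Finset.range d,
            (if j = j₀ then c i • e i else 0)) = if j = j₀ then v else 0 := by
          intro j _
          by_cases h : j = j₀ <;> simp [h, hv_def]
        rw [Finset.sum_congr rfl this, Finset.sum_ite_eq' (Finset.Icc 1 m) j₀ (fun _ => v),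
          if_pos (Finset.mem_Icc.2 ⟨hj₀1, hj₀m⟩)]
      rw [hP]
      have hw : (∑ p ∈ (Finset.Icc 1 m) ×ˢ (Finset.range d),
          c p.2 • (if j₀ + 1 ≤ p.1 then e ((p.1 - j₀) * Q + p.2) else 0)) ∈
          {w : X | u + w ∈ U} ∩ {w : X | v + w ∈ V} := by
        refine hsum _ _ hcard fun p hp => ?_
        simp only [Finset.mem_product, Finset.mem_Icc, Finset.mem_range] at hp
        by_cases h : j₀ + 1 ≤ p.1
        · rw [if_pos h]
          exact hsmall (p.1 - j₀) p.2 (by omega) (by omega) hp.2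
        · rw [if_neg h, smul_zero]
          exact mem_of_mem_nhds hV₀
      exact hw.2
  -- Baire category argument
  haveI : Nonempty X := ⟨0⟩
  set 𝓑 : Set (Set X) := {s | s ∈ TopologicalSpace.countableBasis X ∧ s.Nonempty} with h𝓑
  haveI hcount : 𝓑.Countable :=
    (TopologicalSpace.countable_countableBasis X).mono fun s hs => hs.1
  haveI := hcount.to_subtype
  set G : 𝓑 × ℕ → Set X := fun rm =>
    ⋃ (a : ℕ) (k : ℕ) (_ : 1 ≤ a) (_ : 1 ≤ k),
      ⋂ j ∈ Set.Iic rm.2, (B ^ (a + j * k)) ⁻¹' (rm.1 : Set X) with hG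
  have hGopen : ∀ rm, IsOpen (G rm) := by
    intro rm
    refine isOpen_iUnion fun a => isOpen_iUnion fun k => isOpen_iUnion fun _ =>
      isOpen_iUnion fun _ => (Set.finite_Iic rm.2).isOpen_biInter fun j _ => ?_
    exact (TopologicalSpace.isOpen_of_mem_countableBasis rm.1.2.1).preimage
      (B ^ (a + j * k)).continuous
  have hGdense : ∀ rm, Dense (G rm) := by
    intro rm
    rw [dense_iff_inter_open]
    intro O hO hOne
    obtain ⟨x, hxO, Q, hQ1, hx⟩ := key O (rm.1 : Set X) hO hOne
      (TopologicalSpace.isOpen_of_mem_countableBasis rm.1.2.1) rm.1.2.2 (rm.2 + 1)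
    refine ⟨x, hxO, ?_⟩
    simp only [hG, Set.mem_iUnion, Set.mem_iInter, Set.mem_preimage]
    refine ⟨Q, Q, hQ1, hQ1, fun j hj => ?_⟩
    have := hx (j + 1) (by omega) (by simpa using Nat.succ_le_succ hj)
    have he : Q + j * Q = (j + 1) * Q := by ring
    rwa [he]
  obtain ⟨x, hx⟩ := (dense_iInter_of_isOpen hGopen hGdense).nonempty
  simp only [Set.mem_iInter] at hx
  refine ⟨x, fun U hU hUne => ?_⟩
  obtain ⟨y, hy⟩ := hUne
  obtain ⟨V', hV'B, hyV', hV'U⟩ :=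
    (TopologicalSpace.isBasis_countableBasis X).exists_subset_of_mem_open hy hU
  intro m
  have hxG := hx (⟨V', hV'B, ⟨y, hyV'⟩⟩, m)
  simp only [hG, Set.mem_iUnion, Set.mem_iInter, Set.mem_preimage] at hxG
  obtain ⟨a, k, ha, hk, h⟩ := hxG
  exact ⟨a, k, ha, hk, fun j hj => hV'U (h j hj)⟩
end

section
/- Let T be a continuous linear operator on a separable Fréchet space such that the 2-fold direct sum T ⊕ T is AP-transitive: for all nonempty open U₁, U₂, V₁, V₂ ⊆ X and every m there are x_i ∈ U_i and a, k with T^{a+jk} x_i ∈ V_i for 0 ≤ j ≤ m, i = 1, 2. Then for every n ≥ 1 the n-fold direct sum T ⊕ ... ⊕ T is AP-transitive: for all nonempty open sets U₁, ..., U_n, V₁, ..., V_n and every m there are x_i ∈ U_i and a, k with T^{a+jk} x_i ∈ V_i for all 0 ≤ j ≤ m and 1 ≤ i ≤ n. -/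
/-!
Taking `m = 0`, AP-transitivity of `T ⊕ T` makes `T` weakly mixing. Induct on the number of
summands: for open pairs `(U, V)` and `(U', V')`, weak mixing gives `c` with `U ∩ T⁻ᶜ U'` and
`V ∩ T⁻ᶜ V'` nonempty; AP-transitivity of the smaller sum, with these two sets merged into one
coordinate, yields a point `x` that serves for `(U, V)`, while `Tᶜ x` serves for `(U', V')` since
`Tᶜ` commutes with the iterates of `T`.
-/

open Function

section APTransitive

variable {X : Type*} [TopologicalSpace X] {f : X → X}

/-- AP-transitivity of the direct sum of copies of `f` indexed by `ι`. -/
def IsAPTransitive (f : X → X) (ι : Type*) : Prop :=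
  ∀ U V : ι → Set X, (∀ i, IsOpen (U i)) → (∀ i, (U i).Nonempty) →
    (∀ i, IsOpen (V i)) → (∀ i, (V i).Nonempty) → ∀ m : ℕ,
    ∃ x : ι → X, ∃ a k : ℕ, 1 ≤ k ∧ ∀ i, x i ∈ U i ∧ ∀ j ≤ m, f^[a + j * k] (x i) ∈ V i

/-- `f × f` is topologically transitive. -/
def IsWeaklyMixing (f : X → X) : Prop :=
  ∀ U₁ V₁ U₂ V₂ : Set X, IsOpen U₁ → U₁.Nonempty → IsOpen V₁ → V₁.Nonempty →
    IsOpen U₂ → U₂.Nonempty → IsOpen V₂ → V₂.Nonempty →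
    ∃ c, (U₁ ∩ f^[c] ⁻¹' V₁).Nonempty ∧ (U₂ ∩ f^[c] ⁻¹' V₂).Nonempty

theorem isAPTransitive_of_isEmpty (f : X → X) (ι : Type*) [IsEmpty ι] : IsAPTransitive f ι :=
  fun _ _ _ _ _ _ _ => ⟨isEmptyElim, 0, 1, le_rfl, isEmptyElim⟩

theorem IsAPTransitive.of_surjective {ι κ : Type*} (h : IsAPTransitive f ι) (s : ι → κ)
    (hs : Surjective s) : IsAPTransitive f κ := by
  intro U V hUo hUne hVo hVne m
  obtain ⟨x, a, k, hk, hx⟩ := h (U ∘ s) (V ∘ s) (fun i => hUo (s i)) (fun i => hUne (s i))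
    (fun i => hVo (s i)) (fun i => hVne (s i)) m
  refine ⟨x ∘ surjInv hs, a, k, hk, fun i => ?_⟩
  simpa only [comp_apply, surjInv_eq hs i] using hx (surjInv hs i)

theorem IsAPTransitive.isWeaklyMixing (h : IsAPTransitive f (Fin 2)) : IsWeaklyMixing f := by
  intro U₁ V₁ U₂ V₂ hU₁o hU₁ne hV₁o hV₁ne hU₂o hU₂ne hV₂o hV₂ne
  obtain ⟨x, a, k, -, hx⟩ := h ![U₁, U₂] ![V₁, V₂] (Fin.forall_fin_two.2 ⟨hU₁o, hU₂o⟩)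
    (Fin.forall_fin_two.2 ⟨hU₁ne, hU₂ne⟩) (Fin.forall_fin_two.2 ⟨hV₁o, hV₂o⟩)
    (Fin.forall_fin_two.2 ⟨hV₁ne, hV₂ne⟩) 0
  refine ⟨a, ⟨x 0, (hx 0).1, by simpa using (hx 0).2 0 le_rfl⟩,
    ⟨x 1, (hx 1).1, by simpa using (hx 1).2 0 le_rfl⟩⟩

theorem IsAPTransitive.option {ι : Type*} (hf : Continuous f) (hmix : IsWeaklyMixing f)
    (h : IsAPTransitive f ι) (i₀ : ι) : IsAPTransitive f (Option ι) := by
  classical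
  intro U V hUo hUne hVo hVne m
  obtain ⟨c, hUc, hVc⟩ := hmix (U (some i₀)) (U none) (V (some i₀)) (V none)
    (hUo _) (hUne _) (hUo _) (hUne _) (hVo _) (hVne _) (hVo _) (hVne _)
  obtain ⟨x, a, k, hk, hx⟩ := h
    (update (U ∘ some) i₀ (U (some i₀) ∩ f^[c] ⁻¹' U none))
    (update (V ∘ some) i₀ (V (some i₀) ∩ f^[c] ⁻¹' V none))
    ((forall_update_iff _ fun _ s => IsOpen s).2
      ⟨(hUo _).inter ((hUo _).preimage (hf.iterate c)), fun _ _ => hUo _⟩)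
    ((forall_update_iff _ fun _ s => Set.Nonempty s).2 ⟨hUc, fun _ _ => hUne _⟩)
    ((forall_update_iff _ fun _ s => IsOpen s).2
      ⟨(hVo _).inter ((hVo _).preimage (hf.iterate c)), fun _ _ => hVo _⟩)
    ((forall_update_iff _ fun _ s => Set.Nonempty s).2 ⟨hVc, fun _ _ => hVne _⟩) m
  refine ⟨fun o => o.elim (f^[c] (x i₀)) x, a, k, hk, ?_⟩
  have hx₀ := hx i₀
  simp only [update_self] at hx₀
  rintro (_ | i)
  · refine ⟨hx₀.1.2, fun j hj => ?_⟩
    show f^[a + j * k] (f^[c] (x i₀)) ∈ V none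
    rw [(Commute.iterate_iterate_self f _ c).eq]
    exact (hx₀.2 j hj).2
  · rcases eq_or_ne i i₀ with rfl | hi
    · exact ⟨hx₀.1.1, fun j hj => (hx₀.2 j hj).1⟩
    · simpa only [Option.elim_some, update_of_ne hi, comp_apply] using hx i

theorem IsAPTransitive.fin (hf : Continuous f) (h : IsAPTransitive f (Fin 2)) :
    ∀ n, IsAPTransitive f (Fin n)
  | 0 => isAPTransitive_of_isEmpty f _
  | 1 => h.of_surjective (fun _ => 0) fun _ => ⟨0, Subsingleton.elim _ _⟩
  | n + 2 => ((IsAPTransitive.fin hf h (n + 1)).option hf h.isWeaklyMixing 0).of_surjective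
      _ (finSuccEquiv (n + 1)).symm.surjective

end APTransitive

theorem twofold_AP_transitive_implies_nfold_general
    {X : Type*} [AddCommGroup X] [Module ℝ X] [UniformSpace X]
    (T : X →L[ℝ] X)
    (h2 : ∀ U₁ U₂ V₁ V₂ : Set X, IsOpen U₁ → U₁.Nonempty → IsOpen U₂ → U₂.Nonempty →
        IsOpen V₁ → V₁.Nonempty → IsOpen V₂ → V₂.Nonempty → ∀ m : ℕ,
        ∃ x₁ ∈ U₁, ∃ x₂ ∈ U₂, ∃ a k : ℕ, 1 ≤ k ∧
          ∀ j ≤ m, (T ^ (a + j * k)) x₁ ∈ V₁ ∧ (T ^ (a + j * k)) x₂ ∈ V₂) :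
    ∀ n : ℕ, 1 ≤ n → ∀ U V : Fin n → Set X,
      (∀ i, IsOpen (U i)) → (∀ i, (U i).Nonempty) →
      (∀ i, IsOpen (V i)) → (∀ i, (V i).Nonempty) → ∀ m : ℕ,
      ∃ x : Fin n → X, ∃ a k : ℕ, 1 ≤ k ∧
        ∀ i, x i ∈ U i ∧ ∀ j ≤ m, (T ^ (a + j * k)) (x i) ∈ V i := by
  simp only [FunLike.coe_pow_eq_iterate] at h2 ⊢
  have hT : IsAPTransitive T (Fin 2) := by
    intro U V hUo hUne hVo hVne m
    obtain ⟨x₁, hx₁, x₂, hx₂, a, k, hk, hx⟩ :=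
      h2 (U 0) (U 1) (V 0) (V 1) (hUo 0) (hUne 0) (hUo 1) (hUne 1) (hVo 0) (hVne 0) (hVo 1)
        (hVne 1) m
    refine ⟨![x₁, x₂], a, k, hk, Fin.forall_fin_two.2 ⟨⟨hx₁, fun j hj => (hx j hj).1⟩,
      ⟨hx₂, fun j hj => (hx j hj).2⟩⟩⟩
  exact fun n _ => hT.fin T.continuous n

theorem twofold_AP_transitive_implies_nfold
    {X : Type*} [AddCommGroup X] [Module ℝ X] [UniformSpace X] [IsUniformAddGroup X]
    [ContinuousSMul ℝ X] [LocallyConvexSpace ℝ X] [CompleteSpace X]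
    [TopologicalSpace.MetrizableSpace X] [TopologicalSpace.SeparableSpace X]
    (T : X →L[ℝ] X)
    (h2 : ∀ U₁ U₂ V₁ V₂ : Set X, IsOpen U₁ → U₁.Nonempty → IsOpen U₂ → U₂.Nonempty →
        IsOpen V₁ → V₁.Nonempty → IsOpen V₂ → V₂.Nonempty → ∀ m : ℕ,
        ∃ x₁ ∈ U₁, ∃ x₂ ∈ U₂, ∃ a k : ℕ, 1 ≤ k ∧
          ∀ j ≤ m, (T ^ (a + j * k)) x₁ ∈ V₁ ∧ (T ^ (a + j * k)) x₂ ∈ V₂) :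
    ∀ n : ℕ, 1 ≤ n → ∀ U V : Fin n → Set X,
      (∀ i, IsOpen (U i)) → (∀ i, (U i).Nonempty) →
      (∀ i, IsOpen (V i)) → (∀ i, (V i).Nonempty) → ∀ m : ℕ,
      ∃ x : Fin n → X, ∃ a k : ℕ, 1 ≤ k ∧
        ∀ i, x i ∈ U i ∧ ∀ j ≤ m, (T ^ (a + j * k)) (x i) ∈ V i :=
  twofold_AP_transitive_implies_nfold_general T h2
end

section
/- Let T be a continuous linear operator on a separable Fréchet space. Then the following are equivalent: (a) for all nonempty open U₁, U₂, V₁, V₂ and every m there are x₁ ∈ U₁, x₂ ∈ U₂ and a, k with T^{a+jk}x_i ∈ V_i for 0 ≤ j ≤ m; (b) for all nonempty open U, V₁, V₂ and every m there exist x₁, x₂ ∈ U and a, k ∈ ℕ such that T^{a+jk} x₁ ∈ V₁ and T^{a+jk} x₂ ∈ V₂ for every 0 ≤ j ≤ m. -/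
/-!
(a) ⇒ (b) is the case `U₁ = U₂`. Conversely, (b) applied to a progression of length `n`
shows that every iterate `T^n` has dense range, and (b) with `m = 0` gives some `a` with
`T^a U₁ ∩ U₂ ≠ ∅`. Applying (b) to the source `U₁ ∩ T^{-a} U₂` with targets `V₁` and
`T^{-a} V₂` (nonempty by density) yields `x₁` and `y`; then `x₂ = T^a y ∈ U₂` works, because
`T^a` commutes with the iterates along the progression.
-/

open Function

section APTransitivity

variable {X : Type*} [TopologicalSpace X] {f : X → X}

def IsAPTransitivePair (f : X → X) : Prop :=
  ∀ U₁ U₂ V₁ V₂ : Set X, IsOpen U₁ → U₁.Nonempty → IsOpen U₂ → U₂.Nonempty →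
    IsOpen V₁ → V₁.Nonempty → IsOpen V₂ → V₂.Nonempty → ∀ m : ℕ,
    ∃ x₁ ∈ U₁, ∃ x₂ ∈ U₂, ∃ a k : ℕ, 1 ≤ k ∧
      ∀ j ≤ m, f^[a + j * k] x₁ ∈ V₁ ∧ f^[a + j * k] x₂ ∈ V₂

def IsAPSingleSource (f : X → X) : Prop :=
  ∀ U V₁ V₂ : Set X, IsOpen U → U.Nonempty →
    IsOpen V₁ → V₁.Nonempty → IsOpen V₂ → V₂.Nonempty → ∀ m : ℕ,
    ∃ x₁ ∈ U, ∃ x₂ ∈ U, ∃ a k : ℕ, 1 ≤ k ∧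
      ∀ j ≤ m, f^[a + j * k] x₁ ∈ V₁ ∧ f^[a + j * k] x₂ ∈ V₂

theorem IsAPTransitivePair.isAPSingleSource (h : IsAPTransitivePair f) :
    IsAPSingleSource f :=
  fun U V₁ V₂ hU hUne => h U U V₁ V₂ hU hUne hU hUne

namespace IsAPSingleSource

theorem exists_iterate_mem (h : IsAPSingleSource f) {U V : Set X} (hU : IsOpen U)
    (hUne : U.Nonempty) (hV : IsOpen V) (hVne : V.Nonempty) :
    ∃ x ∈ U, ∃ a, f^[a] x ∈ V := by
  obtain ⟨x, hx, _, _, a, k, _, hj⟩ := h U V V hU hUne hV hVne hV hVne 0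
  exact ⟨x, hx, a, by simpa using (hj 0 le_rfl).1⟩

theorem denseRange_iterate (h : IsAPSingleSource f) (n : ℕ) : DenseRange f^[n] := by
  refine dense_iff_inter_open.2 fun V hV hVne => ?_
  obtain ⟨x, _, _, _, a, k, hk, hj⟩ :=
    h Set.univ V V isOpen_univ (hVne.mono V.subset_univ) hV hVne hV hVne n
  obtain ⟨k, rfl⟩ := Nat.exists_eq_add_of_le' hk
  have hsplit : a + n * (k + 1) = n + (a + n * k) := by ring
  refine ⟨f^[a + n * (k + 1)] x, (hj n le_rfl).1, f^[a + n * k] x, ?_⟩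
  rw [← iterate_add_apply, hsplit]

theorem isAPTransitivePair (hf : Continuous f) (h : IsAPSingleSource f) :
    IsAPTransitivePair f := by
  intro U₁ U₂ V₁ V₂ hU₁ hU₁ne hU₂ hU₂ne hV₁ hV₁ne hV₂ hV₂ne m
  obtain ⟨y, hyU₁, a, hyU₂⟩ := h.exists_iterate_mem hU₁ hU₁ne hU₂ hU₂ne
  have hcont : Continuous f^[a] := hf.iterate a
  have hsource : IsOpen (U₁ ∩ f^[a] ⁻¹' U₂) := hU₁.inter (hU₂.preimage hcont)
  have htarget : (f^[a] ⁻¹' V₂).Nonempty := (h.denseRange_iterate a).exists_mem_open hV₂ hV₂ne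
  obtain ⟨z₁, hz₁, z₂, hz₂, p, q, hq, hP⟩ :=
    h _ V₁ _ hsource ⟨y, hyU₁, hyU₂⟩ hV₁ hV₁ne (hV₂.preimage hcont) htarget m
  refine ⟨z₁, hz₁.1, f^[a] z₂, hz₂.2, p, q, hq, fun j hj => ⟨(hP j hj).1, ?_⟩⟩
  rw [(Commute.iterate_iterate_self f _ _).eq]
  exact (hP j hj).2

end IsAPSingleSource

theorem isAPTransitivePair_iff_isAPSingleSource (hf : Continuous f) :
    IsAPTransitivePair f ↔ IsAPSingleSource f :=
  ⟨IsAPTransitivePair.isAPSingleSource, IsAPSingleSource.isAPTransitivePair hf⟩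

end APTransitivity

theorem AP_transitive_pair_iff_single_source_general
    {X : Type*} [AddCommGroup X] [Module ℝ X] [UniformSpace X]
    (T : X →L[ℝ] X) :
    (∀ U₁ U₂ V₁ V₂ : Set X, IsOpen U₁ → U₁.Nonempty → IsOpen U₂ → U₂.Nonempty →
        IsOpen V₁ → V₁.Nonempty → IsOpen V₂ → V₂.Nonempty → ∀ m : ℕ,
        ∃ x₁ ∈ U₁, ∃ x₂ ∈ U₂, ∃ a k : ℕ, 1 ≤ k ∧
          ∀ j ≤ m, (T ^ (a + j * k)) x₁ ∈ V₁ ∧ (T ^ (a + j * k)) x₂ ∈ V₂)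
    ↔ (∀ U V₁ V₂ : Set X, IsOpen U → U.Nonempty →
        IsOpen V₁ → V₁.Nonempty → IsOpen V₂ → V₂.Nonempty → ∀ m : ℕ,
        ∃ x₁ ∈ U, ∃ x₂ ∈ U, ∃ a k : ℕ, 1 ≤ k ∧
          ∀ j ≤ m, (T ^ (a + j * k)) x₁ ∈ V₁ ∧ (T ^ (a + j * k)) x₂ ∈ V₂) := by
  simp only [FunLike.coe_pow_eq_iterate]
  exact isAPTransitivePair_iff_isAPSingleSource T.continuous

theorem AP_transitive_pair_iff_single_source
    {X : Type*} [AddCommGroup X] [Module ℝ X] [UniformSpace X] [IsUniformAddGroup X]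
    [ContinuousSMul ℝ X] [LocallyConvexSpace ℝ X] [CompleteSpace X]
    [TopologicalSpace.MetrizableSpace X] [TopologicalSpace.SeparableSpace X]
    (T : X →L[ℝ] X) :
    (∀ U₁ U₂ V₁ V₂ : Set X, IsOpen U₁ → U₁.Nonempty → IsOpen U₂ → U₂.Nonempty →
        IsOpen V₁ → V₁.Nonempty → IsOpen V₂ → V₂.Nonempty → ∀ m : ℕ,
        ∃ x₁ ∈ U₁, ∃ x₂ ∈ U₂, ∃ a k : ℕ, 1 ≤ k ∧
          ∀ j ≤ m, (T ^ (a + j * k)) x₁ ∈ V₁ ∧ (T ^ (a + j * k)) x₂ ∈ V₂)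
    ↔ (∀ U V₁ V₂ : Set X, IsOpen U → U.Nonempty →
        IsOpen V₁ → V₁.Nonempty → IsOpen V₂ → V₂.Nonempty → ∀ m : ℕ,
        ∃ x₁ ∈ U, ∃ x₂ ∈ U, ∃ a k : ℕ, 1 ≤ k ∧
          ∀ j ≤ m, (T ^ (a + j * k)) x₁ ∈ V₁ ∧ (T ^ (a + j * k)) x₂ ∈ V₂) :=
  AP_transitive_pair_iff_single_source_general T
end

section
/- Let T be a continuous linear operator on a separable Fréchet space satisfying: there exist a family of natural numbers n_{k,j} = a_k + j·c_k (k ∈ ℕ, 0 ≤ j ≤ k, with c_k ≥ 1), dense sets X₀, Y₀ ⊆ X, and maps S_{k,j} : Y₀ → X such that for every x ∈ X₀ and y ∈ Y₀: (1) T^{n_{k,j}} x → 0 as k → ∞, uniformly in 0 ≤ j ≤ k; (2) (S_{k,0} + ... + S_{k,k})(y) → 0; (3) T^{n_{k,j}}(S_{k,0} + ... + S_{k,k})(y) → y as k → ∞, uniformly in j ≤ k. Then T is multiply recurrent. -/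
open Filter Topology

/-!
Take `y ∈ Y₀ ∩ U` and `k` large. Since `n_{k,j} = a_k + j c_k`, the point
`x = T^{a_k} (S_{k,0} + ⋯ + S_{k,k}) y` satisfies `T^{j c_k} x = T^{n_{k,j}} (∑ᵢ S_{k,i} y)`,
which lies in `U` for all `j ≤ k`; so `c_k ≥ 1` is a common return time of `x` to `U`.
-/

theorem ContinuousLinearMap.exists_mem_forall_pow_mul_apply_mem
    {R M : Type*} [Semiring R] [TopologicalSpace M] [AddCommMonoid M] [Module R M]
    (T : M →L[R] M) (U : Set M) (z : M) (a c m : ℕ)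
    (h : ∀ j ≤ m, (T ^ (a + j * c)) z ∈ U) :
    ∃ x ∈ U, ∀ j ≤ m, (T ^ (j * c)) x ∈ U := by
  refine ⟨(T ^ a) z, by simpa using h 0 m.zero_le, fun j hj => ?_⟩
  rw [← mul_apply_eq_comp, ← pow_add, add_comm]
  exact h j hj

theorem criterion_implies_multiplyRecurrent_general
    {X : Type*} [AddCommGroup X] [Module ℝ X] [UniformSpace X]
    (T : X →L[ℝ] X) (a c : ℕ → ℕ) (hc : ∀ k, 1 ≤ c k)
    (Y₀ : Set X) (hY₀ : Dense Y₀)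
    (S : ℕ → ℕ → X → X)
    (h3 : ∀ y ∈ Y₀, ∀ W ∈ 𝓝 y, ∃ K : ℕ, ∀ k ≥ K, ∀ j ≤ k,
        (T ^ (a k + j * c k)) (∑ i ∈ Finset.range (k + 1), S k i y) ∈ W) :
    ∀ U : Set X, IsOpen U → U.Nonempty → ∀ m : ℕ,
      ∃ k : ℕ, 1 ≤ k ∧ ∃ x ∈ U, ∀ j ≤ m, (T ^ (j * k)) x ∈ U := by
  intro U hU hne m
  obtain ⟨y, hyY, hyU⟩ := hY₀.exists_mem_open hU hne
  obtain ⟨K, hK⟩ := h3 y hyY U (hU.mem_nhds hyU)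
  set k := max K m
  refine ⟨c k, hc k, T.exists_mem_forall_pow_mul_apply_mem U (∑ i ∈ Finset.range (k + 1), S k i y)
    (a k) (c k) m fun j hj => ?_⟩
  exact hK k (le_max_left K m) j (hj.trans (le_max_right K m))

theorem criterion_implies_multiplyRecurrent
    {X : Type*} [AddCommGroup X] [Module ℝ X] [UniformSpace X] [IsUniformAddGroup X]
    [ContinuousSMul ℝ X] [LocallyConvexSpace ℝ X] [CompleteSpace X]
    [TopologicalSpace.MetrizableSpace X] [TopologicalSpace.SeparableSpace X]
    (T : X →L[ℝ] X) (a c : ℕ → ℕ) (hc : ∀ k, 1 ≤ c k)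
    (X₀ Y₀ : Set X) (hX₀ : Dense X₀) (hY₀ : Dense Y₀)
    (S : ℕ → ℕ → X → X)
    (h1 : ∀ x ∈ X₀, ∀ W ∈ 𝓝 (0 : X), ∃ K : ℕ, ∀ k ≥ K, ∀ j ≤ k,
        (T ^ (a k + j * c k)) x ∈ W)
    (h2 : ∀ y ∈ Y₀,
        Tendsto (fun k : ℕ => ∑ i ∈ Finset.range (k + 1), S k i y) atTop (𝓝 0))
    (h3 : ∀ y ∈ Y₀, ∀ W ∈ 𝓝 y, ∃ K : ℕ, ∀ k ≥ K, ∀ j ≤ k,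
        (T ^ (a k + j * c k)) (∑ i ∈ Finset.range (k + 1), S k i y) ∈ W) :
    ∀ U : Set X, IsOpen U → U.Nonempty → ∀ m : ℕ,
      ∃ k : ℕ, 1 ≤ k ∧ ∃ x ∈ U, ∀ j ≤ m, (T ^ (j * k)) x ∈ U :=
  criterion_implies_multiplyRecurrent_general T a c hc Y₀ hY₀ S h3
end

section
/- A continuous linear operator T on a separable Fréchet space is multiply recurrent if and only if it is \overline{AP}-recurrent, i.e., there is a dense set of vectors x such that for every open neighborhood U of x and every m there is a single k such that N_T(x,U) contains infinitely many arithmetic progressions of length m and common difference k (infinitely many a with {a, a+k, ..., a+mk} ⊆ N_T(x,U)). -/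
open Filter Topology

/-- `A ∈ \overline{AP}`: for every `m` there is a common difference `k` such that `A`
contains infinitely many arithmetic progressions of length `m` and difference `k`. -/
def InOverlineAP (A : Set ℕ) : Prop :=
  ∀ m : ℕ, ∃ k : ℕ, 1 ≤ k ∧ {a : ℕ | ∀ j ≤ m, a + j * k ∈ A}.Infinite

/-! The sets of points returning to an open set `V` along some progression `k, 2k, …, mk` are
open, and multiple recurrence makes them dense near `V`; by the Baire category theorem over a
countable basis, a dense set of points `x` then returns along progressions to each of its own
neighbourhoods `U`. Such an `x` is recurrent, so it returns infinitely often to the open set of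
starting points of progressions inside `U`, which yields infinitely many progressions in the
return set of `U`. Conversely, a progression `a, a + k, …, a + mk` of returns of `x` to `U` is the
progression `0, k, …, mk` of returns of `T^a x` to `U`. -/

def multipleReturnSet {X : Type*} (f : X → X) (U : Set X) (m : ℕ) : Set X :=
  {x | ∃ k, 1 ≤ k ∧ ∀ j ≤ m, f^[j * k] x ∈ U}

theorem multipleReturnSet_mono {X : Type*} {f : X → X} {U V : Set X} (hUV : U ⊆ V) (m : ℕ) :
    multipleReturnSet f U m ⊆ multipleReturnSet f V m :=
  fun _ ⟨k, hk, hx⟩ => ⟨k, hk, fun j hj => hUV (hx j hj)⟩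

def IsMultiplyRecurrent {X : Type*} [TopologicalSpace X] (f : X → X) : Prop :=
  ∀ U : Set X, IsOpen U → U.Nonempty → ∀ m : ℕ,
    ∃ k : ℕ, 1 ≤ k ∧ ∃ x ∈ U, ∀ j ≤ m, f^[j * k] x ∈ U

def IsMultiplyRecurrentPt {X : Type*} [TopologicalSpace X] (f : X → X) (x : X) : Prop :=
  ∀ U : Set X, IsOpen U → x ∈ U → ∀ m : ℕ, x ∈ multipleReturnSet f U m

def IsOverlineAPRecurrentPt {X : Type*} [TopologicalSpace X] (f : X → X) (x : X) : Prop :=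
  ∀ U : Set X, IsOpen U → x ∈ U → InOverlineAP {n : ℕ | f^[n] x ∈ U}

section

variable {X : Type*} [TopologicalSpace X] {f : X → X}

theorem isOpen_multipleReturnSet (hf : Continuous f) {U : Set X} (hU : IsOpen U) (m : ℕ) :
    IsOpen (multipleReturnSet f U m) := by
  have hset : multipleReturnSet f U m =
      ⋃ k ∈ {k : ℕ | 1 ≤ k}, ⋂ j ∈ Set.Iic m, f^[j * k] ⁻¹' U := by
    ext x
    simp [multipleReturnSet]
  rw [hset]
  exact isOpen_biUnion fun k _ =>
    (Set.finite_Iic m).isOpen_biInter fun j _ => hU.preimage (hf.iterate _)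

theorem IsMultiplyRecurrent.dense_compl_closure_union_multipleReturnSet
    (h : IsMultiplyRecurrent f) {V : Set X} (hV : IsOpen V) (m : ℕ) :
    Dense ((closure V)ᶜ ∪ multipleReturnSet f V m) := by
  refine dense_iff_inter_open.2 fun W hW hWne => ?_
  by_cases hWV : (W ∩ V).Nonempty
  · obtain ⟨k, hk, x, hx, hret⟩ := h (W ∩ V) (hW.inter hV) hWV m
    exact ⟨x, hx.1, Or.inr ⟨k, hk, fun j hj => (hret j hj).2⟩⟩
  · have hWcl : Disjoint W (closure V) :=
      (Set.disjoint_iff_inter_eq_empty.2 (Set.not_nonempty_iff_eq_empty.1 hWV)).closure_right hW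
    obtain ⟨w, hw⟩ := hWne
    exact ⟨w, hw, Or.inl (Set.disjoint_left.1 hWcl hw)⟩

theorem IsMultiplyRecurrent.dense_setOf_isMultiplyRecurrentPt [BaireSpace X]
    [SecondCountableTopology X] (hf : Continuous f) (h : IsMultiplyRecurrent f) :
    Dense {x | IsMultiplyRecurrentPt f x} := by
  obtain ⟨b, hbc, -, hb⟩ := TopologicalSpace.exists_countable_basis X
  have : Countable b := hbc.to_subtype
  have hG : Dense (⋂ p : b × ℕ, (closure (p.1 : Set X))ᶜ ∪ multipleReturnSet f p.1 p.2) :=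
    dense_iInter_of_isOpen
      (fun p => isClosed_closure.isOpen_compl.union
        (isOpen_multipleReturnSet hf (hb.isOpen p.1.2) p.2))
      (fun p => h.dense_compl_closure_union_multipleReturnSet (hb.isOpen p.1.2) p.2)
  refine hG.mono fun x hx U hU hxU m => ?_
  obtain ⟨V, hVb, hxV, hVU⟩ := hb.exists_subset_of_mem_open hxU hU
  rcases Set.mem_iInter.1 hx (⟨V, hVb⟩, m) with hxV' | hret
  · exact absurd (subset_closure hxV) hxV'
  · exact multipleReturnSet_mono hVU m hret

theorem infinite_setOf_iterate_mem (hf : Continuous f) {x : X}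
    (hx : ∀ V : Set X, IsOpen V → x ∈ V → ∃ k, 1 ≤ k ∧ f^[k] x ∈ V)
    {U : Set X} (hU : IsOpen U) (hxU : x ∈ U) : {n : ℕ | f^[n] x ∈ U}.Infinite := by
  refine Set.infinite_of_forall_exists_gt fun N => ?_
  induction N with
  | zero =>
    obtain ⟨k, hk, hkU⟩ := hx U hU hxU
    exact ⟨k, hkU, hk⟩
  | succ N ih =>
    obtain ⟨n, hnU, hNn⟩ := ih
    obtain ⟨k, hk, hkU⟩ := hx _ (hU.preimage (hf.iterate n)) hnU
    refine ⟨n + k, ?_, by omega⟩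
    rwa [Set.mem_ofPred_eq, Function.iterate_add_apply]

theorem IsMultiplyRecurrentPt.isOverlineAPRecurrentPt (hf : Continuous f) {x : X}
    (hx : IsMultiplyRecurrentPt f x) : IsOverlineAPRecurrentPt f x := by
  intro U hU hxU m
  obtain ⟨k, hk, hret⟩ := hx U hU hxU m
  have hrec : ∀ V : Set X, IsOpen V → x ∈ V → ∃ k, 1 ≤ k ∧ f^[k] x ∈ V := fun V hV hxV => by
    obtain ⟨k, hk, hretV⟩ := hx V hV hxV 1
    exact ⟨k, hk, by simpa using hretV 1 le_rfl⟩
  -- the starting points of progressions of difference `k` inside `U`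
  set W := ⋂ j ∈ Set.Iic m, f^[j * k] ⁻¹' U
  have hW : IsOpen W := (Set.finite_Iic m).isOpen_biInter fun j _ => hU.preimage (hf.iterate _)
  have hxW : x ∈ W := Set.mem_iInter₂.2 hret
  refine ⟨k, hk, (infinite_setOf_iterate_mem hf hrec hW hxW).mono fun a ha j hj => ?_⟩
  have haW : f^[j * k] (f^[a] x) ∈ U := Set.mem_iInter₂.1 ha j hj
  rwa [Set.mem_ofPred_eq, add_comm, Function.iterate_add_apply]

theorem isMultiplyRecurrent_of_dense_setOf_isOverlineAPRecurrentPt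
    (hD : Dense {x | IsOverlineAPRecurrentPt f x}) : IsMultiplyRecurrent f := by
  intro U hU hUne m
  obtain ⟨x, hx, hxU⟩ := hD.exists_mem_open hU hUne
  obtain ⟨k, hk, hprog⟩ := hx U hU hxU m
  obtain ⟨a, ha⟩ := hprog.nonempty
  refine ⟨k, hk, f^[a] x, by simpa using ha 0 m.zero_le, fun j hj => ?_⟩
  rw [← Function.iterate_add_apply, add_comm]
  exact ha j hj

theorem isMultiplyRecurrent_iff_dense_setOf_isOverlineAPRecurrentPt [BaireSpace X]
    [SecondCountableTopology X] (hf : Continuous f) :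
    IsMultiplyRecurrent f ↔ Dense {x | IsOverlineAPRecurrentPt f x} :=
  ⟨fun h => (h.dense_setOf_isMultiplyRecurrentPt hf).mono fun _ hx =>
      IsMultiplyRecurrentPt.isOverlineAPRecurrentPt hf hx,
    isMultiplyRecurrent_of_dense_setOf_isOverlineAPRecurrentPt⟩

end

theorem multiplyRecurrent_iff_overlineAP_recurrent_general
    {X : Type*} [AddCommGroup X] [Module ℝ X] [UniformSpace X] [IsUniformAddGroup X]
    [CompleteSpace X]
    [TopologicalSpace.MetrizableSpace X] [TopologicalSpace.SeparableSpace X]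
    (T : X →L[ℝ] X) :
    (∀ U : Set X, IsOpen U → U.Nonempty → ∀ m : ℕ,
        ∃ k : ℕ, 1 ≤ k ∧ ∃ x ∈ U, ∀ j ≤ m, (T ^ (j * k)) x ∈ U)
    ↔ Dense {x : X | ∀ U : Set X, IsOpen U → x ∈ U →
        InOverlineAP {n : ℕ | (T ^ n) x ∈ U}} := by
  have : (uniformity X).IsCountablyGenerated := IsUniformAddGroup.uniformity_countably_generated
  simp only [FunLike.coe_pow_eq_iterate]
  exact isMultiplyRecurrent_iff_dense_setOf_isOverlineAPRecurrentPt T.continuous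

theorem multiplyRecurrent_iff_overlineAP_recurrent
    {X : Type*} [AddCommGroup X] [Module ℝ X] [UniformSpace X] [IsUniformAddGroup X]
    [ContinuousSMul ℝ X] [LocallyConvexSpace ℝ X] [CompleteSpace X]
    [TopologicalSpace.MetrizableSpace X] [TopologicalSpace.SeparableSpace X]
    (T : X →L[ℝ] X) :
    (∀ U : Set X, IsOpen U → U.Nonempty → ∀ m : ℕ,
        ∃ k : ℕ, 1 ≤ k ∧ ∃ x ∈ U, ∀ j ≤ m, (T ^ (j * k)) x ∈ U)
    ↔ Dense {x : X | ∀ U : Set X, IsOpen U → x ∈ U →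
        InOverlineAP {n : ℕ | (T ^ n) x ∈ U}} :=
  multiplyRecurrent_iff_overlineAP_recurrent_general T
end

section
/- A continuous linear operator T on a separable Fréchet space is AP-hypercyclic if and only if it is \overline{AP}-hypercyclic: there exists a vector x such that for every nonempty open U and every m there is a k such that N_T(x,U) contains infinitely many arithmetic progressions of length m with common difference k. -/
open Filter Topology

/-!
The same vector works in both directions, and only AP ⇒ `\overline{AP}` needs an argument. If `a, a + k, …, a + mk`
all return to `U`, then `T^a x` lies in the open set `W = ⋂_{j ≤ m} T^{-jk} U`, so `W` is nonempty;
the return times of `x` to `W` contain progressions of every length, hence are infinite, and each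
of them starts a progression of length `m` and difference `k` in the return times to `U`.
-/

lemma ContainsAPs.infinite {A : Set ℕ} (h : ContainsAPs A) : A.Infinite := by
  refine Set.infinite_of_forall_exists_gt fun n ↦ ?_
  obtain ⟨a, k, ha, hk, hAP⟩ := h n
  exact ⟨a + n * k, hAP n le_rfl, by nlinarith⟩

lemma InOverlineAP.containsAPs {A : Set ℕ} (h : InOverlineAP A) : ContainsAPs A := by
  intro m
  obtain ⟨k, hk, hinf⟩ := h m
  obtain ⟨a, ha, ha_pos⟩ := hinf.exists_gt 0
  exact ⟨a, k, ha_pos, hk, ha⟩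

lemma iterate_mem_biInter_preimage_iff {X : Type*} (f : X → X) (x : X) (U : Set X) (a m k : ℕ) :
    f^[a] x ∈ ⋂ j ≤ m, f^[j * k] ⁻¹' U ↔ ∀ j ≤ m, f^[a + j * k] x ∈ U := by
  simp only [Set.mem_iInter, Set.mem_preimage, add_comm a, Function.iterate_add_apply]

section Dynamics

variable {X : Type*} [TopologicalSpace X] {f : X → X}

lemma inOverlineAP_of_forall_containsAPs (hf : Continuous f) {x : X}
    (hx : ∀ U : Set X, IsOpen U → U.Nonempty → ContainsAPs {n | f^[n] x ∈ U})
    {U : Set X} (hU : IsOpen U) (hU_ne : U.Nonempty) :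
    InOverlineAP {n | f^[n] x ∈ U} := by
  intro m
  obtain ⟨a, k, -, hk, hAP⟩ := hx U hU hU_ne m
  set W := ⋂ j ≤ m, f^[j * k] ⁻¹' U
  have hW_open : IsOpen W :=
    (Set.finite_le_nat m).isOpen_biInter fun j _ ↦ hU.preimage (hf.iterate _)
  have hW_ne : W.Nonempty := ⟨f^[a] x, (iterate_mem_biInter_preimage_iff f x U a m k).2 hAP⟩
  exact ⟨k, hk, (hx W hW_open hW_ne).infinite.mono fun b hb ↦
    (iterate_mem_biInter_preimage_iff f x U b m k).1 hb⟩

theorem forall_containsAPs_iff_forall_inOverlineAP (hf : Continuous f) (x : X) :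
    (∀ U : Set X, IsOpen U → U.Nonempty → ContainsAPs {n | f^[n] x ∈ U}) ↔
      ∀ U : Set X, IsOpen U → U.Nonempty → InOverlineAP {n | f^[n] x ∈ U} :=
  ⟨fun hx _ hU hU_ne ↦ inOverlineAP_of_forall_containsAPs hf hx hU hU_ne,
    fun hx U hU hU_ne ↦ (hx U hU hU_ne).containsAPs⟩

end Dynamics

lemma ContinuousLinearMap.coe_pow_eq_iterate {R M : Type*} [Semiring R] [TopologicalSpace M]
    [AddCommMonoid M] [Module R M] (T : M →L[R] M) (n : ℕ) : ⇑(T ^ n) = T^[n] :=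
  hom_coe_pow _ rfl (fun _ _ ↦ rfl) _ _

theorem AP_hypercyclic_iff_overlineAP_hypercyclic_general
    {X : Type*} [AddCommGroup X] [Module ℝ X] [UniformSpace X]
    (T : X →L[ℝ] X) :
    (∃ x : X, ∀ U : Set X, IsOpen U → U.Nonempty →
        ContainsAPs {n : ℕ | (T ^ n) x ∈ U})
    ↔ (∃ x : X, ∀ U : Set X, IsOpen U → U.Nonempty →
        InOverlineAP {n : ℕ | (T ^ n) x ∈ U}) := by
  simp only [T.coe_pow_eq_iterate]
  exact exists_congr fun x ↦ forall_containsAPs_iff_forall_inOverlineAP T.continuous x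

theorem AP_hypercyclic_iff_overlineAP_hypercyclic
    {X : Type*} [AddCommGroup X] [Module ℝ X] [UniformSpace X] [IsUniformAddGroup X]
    [ContinuousSMul ℝ X] [LocallyConvexSpace ℝ X] [CompleteSpace X]
    [TopologicalSpace.MetrizableSpace X] [TopologicalSpace.SeparableSpace X]
    (T : X →L[ℝ] X) :
    (∃ x : X, ∀ U : Set X, IsOpen U → U.Nonempty →
        ContainsAPs {n : ℕ | (T ^ n) x ∈ U})
    ↔ (∃ x : X, ∀ U : Set X, IsOpen U → U.Nonempty →
        InOverlineAP {n : ℕ | (T ^ n) x ∈ U}) :=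
  AP_hypercyclic_iff_overlineAP_hypercyclic_general T
end

section
/- Let T be a continuous linear operator on a separable Fréchet space and (λ_n) a sequence of nonzero complex numbers such that λ_{n+τ}/λ_n → 1 for some τ ≥ 1. If (λ_n T^n) has property P_{\overline{AP}}, then T is multiply recurrent. -/
/-!
Near a point `u` of `U`, scalar multiplication by numbers close to `1` keeps a small open
`V ∋ u` inside `U`. Property `P_{\overline{AP}}` for `V` gives a point `x₀` and progressions
`a, a + k, …, a + mτk` with `λ_{a+jk} T^{a+jk} x₀ ∈ V`, for arbitrarily large `a`. Keeping only
every `τ`-th term, the point `x = λ_a T^a x₀` satisfies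
`T^{jkτ} x = (λ_a / λ_{a+jkτ}) • λ_{a+jkτ} T^{a+jkτ} x₀`, and the ratio, a product of `jk` ratios
`λ_n / λ_{n+τ}`, tends to `1` as `a → ∞`,
so `x, T^{kτ} x, …, T^{mkτ} x` all lie in `U`.
-/

open Filter Topology Pointwise

theorem exists_nhds_one_isOpen_smul_subset {M X : Type*} [Monoid M] [TopologicalSpace M]
    [TopologicalSpace X] [MulAction M X] [ContinuousSMul M X] {U : Set X} (hU : IsOpen U)
    {u : X} (hu : u ∈ U) : ∃ s ∈ 𝓝 (1 : M), ∃ V, IsOpen V ∧ u ∈ V ∧ s • V ⊆ U := by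
  have hsmul : ∀ᶠ p in 𝓝 (1 : M) ×ˢ 𝓝 u, p.1 • p.2 ∈ U := by
    rw [← nhds_prod_eq]
    exact continuous_smul.continuousAt.preimage_mem_nhds (by simpa using hU.mem_nhds hu)
  obtain ⟨s, hs, W, hW, hsW⟩ := eventually_prod_iff.1 hsmul
  obtain ⟨V, hVW, hVo, huV⟩ := eventually_nhds_iff.1 hW
  exact ⟨{c | s c}, hs, V, hVo, huV, Set.smul_subset_iff.2 fun c hc v hv => hsW hc (hVW v hv)⟩

theorem tendsto_div_add_mul_of_tendsto_div_add {𝕜 : Type*} [Field 𝕜] [TopologicalSpace 𝕜]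
    [ContinuousMul 𝕜] [ContinuousInv₀ 𝕜] {l : ℕ → 𝕜} (hl : ∀ n, l n ≠ 0) {τ : ℕ}
    (h : Tendsto (fun n => l (n + τ) / l n) atTop (𝓝 1)) (q : ℕ) :
    Tendsto (fun n => l n / l (n + q * τ)) atTop (𝓝 1) := by
  have hstep : Tendsto (fun n => l n / l (n + τ)) atTop (𝓝 1) := by
    simpa only [inv_div, inv_one] using h.inv₀ one_ne_zero
  induction q with
  | zero => simpa [div_self (hl _)] using tendsto_const_nhds
  | succ q ih =>
    have hprod := ih.mul (hstep.comp (tendsto_add_atTop_nat (q * τ)))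
    rw [one_mul] at hprod
    refine hprod.congr fun n => ?_
    simp only [Function.comp_apply, add_mul, one_mul, ← add_assoc]
    rw [div_mul_div_cancel₀ (hl _)]

theorem P_overlineAP_implies_multiplyRecurrent_general
    {X : Type*} [AddCommGroup X] [Module ℂ X] [UniformSpace X]
    [ContinuousSMul ℂ X]
    (T : X →L[ℂ] X) (l : ℕ → ℂ) (hl : ∀ n, l n ≠ 0)
    (τ : ℕ) (hτ : 1 ≤ τ)
    (hratio : Tendsto (fun n : ℕ => l (n + τ) / l n) atTop (𝓝 1))
    (hP : ∀ U : Set X, IsOpen U → U.Nonempty → ∃ x : X, ∀ m : ℕ,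
        ∃ k : ℕ, 1 ≤ k ∧
          {a : ℕ | ∀ j ≤ m, l (a + j * k) • (T ^ (a + j * k)) x ∈ U}.Infinite) :
    ∀ U : Set X, IsOpen U → U.Nonempty → ∀ m : ℕ,
      ∃ k : ℕ, 1 ≤ k ∧ ∃ x ∈ U, ∀ j ≤ m, (T ^ (j * k)) x ∈ U := by
  intro U hU ⟨u, hu⟩ m
  obtain ⟨s, hs, V, hVo, huV, hsV⟩ := exists_nhds_one_isOpen_smul_subset (M := ℂ) hU hu
  obtain ⟨x₀, hx₀⟩ := hP V hVo ⟨u, huV⟩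
  obtain ⟨k, hk, hinf⟩ := hx₀ (m * τ)
  have hratios : ∀ᶠ a in atTop, ∀ j ∈ Set.Iic m, l a / l (a + j * k * τ) ∈ s :=
    (Set.finite_Iic m).eventually_all.2 fun j _ =>
      tendsto_div_add_mul_of_tendsto_div_add hl hratio (j * k) hs
  obtain ⟨a, hprog, hclose⟩ :=
    ((Nat.frequently_atTop_iff_infinite.2 hinf).and_eventually hratios).exists
  refine ⟨k * τ, le_mul_of_le_of_one_le hk hτ, l a • (T ^ a) x₀, ?_, fun j hj => ?_⟩
  · simpa using hsV (Set.smul_mem_smul (mem_of_mem_nhds hs) (hprog 0 (Nat.zero_le _)))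
  · have hterm := hprog (j * τ) (Nat.mul_le_mul_right τ hj)
    rw [show a + j * τ * k = a + j * k * τ by ring] at hterm
    have hshift : (T ^ (j * (k * τ))) (l a • (T ^ a) x₀) =
        (l a / l (a + j * k * τ)) • l (a + j * k * τ) • (T ^ (a + j * k * τ)) x₀ := by
      rw [smul_smul, div_mul_cancel₀ _ (hl _), map_smul, ← mul_apply_eq_comp,
        ← pow_add, show j * (k * τ) + a = a + j * k * τ by ring]
    exact hshift ▸ hsV (Set.smul_mem_smul (hclose j hj) hterm)

theorem P_overlineAP_implies_multiplyRecurrent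
    {X : Type*} [AddCommGroup X] [Module ℂ X] [UniformSpace X] [IsUniformAddGroup X]
    [ContinuousSMul ℂ X] [Module ℝ X] [IsScalarTower ℝ ℂ X] [LocallyConvexSpace ℝ X] [CompleteSpace X]
    [TopologicalSpace.MetrizableSpace X] [TopologicalSpace.SeparableSpace X]
    (T : X →L[ℂ] X) (l : ℕ → ℂ) (hl : ∀ n, l n ≠ 0)
    (τ : ℕ) (hτ : 1 ≤ τ)
    (hratio : Tendsto (fun n : ℕ => l (n + τ) / l n) atTop (𝓝 1))
    (hP : ∀ U : Set X, IsOpen U → U.Nonempty → ∃ x : X, ∀ m : ℕ,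
        ∃ k : ℕ, 1 ≤ k ∧
          {a : ℕ | ∀ j ≤ m, l (a + j * k) • (T ^ (a + j * k)) x ∈ U}.Infinite) :
    ∀ U : Set X, IsOpen U → U.Nonempty → ∀ m : ℕ,
      ∃ k : ℕ, 1 ≤ k ∧ ∃ x ∈ U, ∀ j ≤ m, (T ^ (j * k)) x ∈ U :=
  P_overlineAP_implies_multiplyRecurrent_general T l hl τ hτ hratio hP
end

section
/- Let T be a continuous linear operator on a Banach space X such that T - I is a weighted backward shift which, together with its powers, is such that {T, T^2, ..., T^m} is d-transitive for every m; more precisely, assume that for every m and all nonempty open sets U, V₁, ..., V_m there is n with U ∩ T^{-n}(V₁) ∩ T^{-2n}(V₂) ∩ ... ∩ T^{-mn}(V_m) ≠ ∅. Then T is AP-hypercyclic (hypercyclic and multiply recurrent). -/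
open Filter Topology

theorem dTransitive_powers_implies_AP_hypercyclic
    {X : Type*} [NormedAddCommGroup X] [NormedSpace ℝ X] [CompleteSpace X]
    [TopologicalSpace.SeparableSpace X]
    (T : X →L[ℝ] X)
    (hd : ∀ m : ℕ, ∀ U : Set X, ∀ V : ℕ → Set X,
        IsOpen U → U.Nonempty →
        (∀ i, 1 ≤ i → i ≤ m → IsOpen (V i)) → (∀ i, 1 ≤ i → i ≤ m → (V i).Nonempty) →
        ∃ n : ℕ, ∃ x ∈ U, ∀ i, 1 ≤ i → i ≤ m → (T ^ (i * n)) x ∈ V i) :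
    ∃ x : X, ∀ U : Set X, IsOpen U → U.Nonempty →
        ContainsAPs {n : ℕ | (T ^ n) x ∈ U} := by
  classical
  obtain ⟨b, hbc, hbne, hbasis⟩ := TopologicalSpace.exists_countable_basis X
  set G : ℕ → Set X → Set X := fun m u =>
    {x | ∃ n, 1 ≤ n ∧ ∀ i, 1 ≤ i → i ≤ m → (T ^ (i * n)) x ∈ u} with hGdef
  have hGopen : ∀ m (u : Set X), IsOpen u → IsOpen (G m u) := by
    intro m u hu
    have heq : G m u = ⋃ n ∈ {n : ℕ | 1 ≤ n}, ⋂ i ∈ Set.Icc 1 m, (T ^ (i * n)) ⁻¹' u := by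
      ext x
      simp [hGdef, Set.mem_Icc, and_imp]
    rw [heq]
    exact isOpen_biUnion fun n _ =>
      (Set.finite_Icc 1 m).isOpen_biInter fun i _ =>
        hu.preimage (T ^ (i * n)).continuous
  have hGdense : ∀ m (u : Set X), IsOpen u → u.Nonempty → Dense (G m u) := by
    intro m u hu hune
    rcases subsingleton_or_nontrivial X with hs | hn
    · have : G m u = Set.univ := by
        ext x
        simp only [hGdef, Set.mem_setOf_eq, Set.mem_univ, iff_true]
        obtain ⟨y, hy⟩ := hune
        exact ⟨1, le_refl 1, fun i _ _ => by rwa [Subsingleton.elim ((T ^ (i * 1)) x) y]⟩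
      rw [this]; exact dense_univ
    · rw [dense_iff_inter_open]
      intro W hW hWne
      obtain ⟨w, hw⟩ := hWne
      obtain ⟨z, hz⟩ := exists_ne w
      obtain ⟨A, B, hA, hB, hzA, hwB, hAB⟩ := t2_separation hz
      set V : ℕ → Set X := fun i => if i = m + 1 then A else u with hVdef
      obtain ⟨n, x, hxW, hx⟩ := hd (m + 1) (W ∩ B) V (hW.inter hB) ⟨w, hw, hwB⟩
        (fun i _ _ => by simp only [V]; split <;> [exact hA; exact hu])
        (fun i _ _ => by simp only [V]; split <;> [exact ⟨z, hzA⟩; exact hune])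
      have hn1 : 1 ≤ n := by
        by_contra hcon
        have hn0 : n = 0 := by omega
        have hmem := hx (m + 1) (by omega) le_rfl
        rw [hn0, Nat.mul_zero, pow_zero] at hmem
        simp only [hVdef, if_pos rfl] at hmem
        exact Set.disjoint_left.mp hAB hmem hxW.2
      refine ⟨x, hxW.1, n, hn1, fun i hi1 hi2 => ?_⟩
      have hmem := hx i hi1 (by omega)
      simpa only [hVdef, if_neg (by omega : i ≠ m + 1)] using hmem
  haveI : Countable ↥b := hbc.to_subtype
  have hdense : Dense (⋂ p : ↥b × ℕ, G p.2 (p.1 : Set X)) :=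
    dense_iInter_of_isOpen
      (fun p => hGopen _ _ (hbasis.isOpen p.1.2))
      (fun p => hGdense _ _ (hbasis.isOpen p.1.2)
        (Set.nonempty_iff_ne_empty.mpr fun h => hbne (h ▸ p.1.2)))
  obtain ⟨x, hx⟩ := hdense.nonempty
  refine ⟨x, fun U hU hUne => ?_⟩
  obtain ⟨y, hy⟩ := hUne
  obtain ⟨v, hvb, hyv, hvU⟩ := hbasis.exists_subset_of_mem_open hy hU
  intro m
  have hxG : x ∈ G (m + 1) v := Set.mem_iInter.mp hx (⟨v, hvb⟩, m + 1)
  obtain ⟨n, hn1, hn⟩ := hxG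
  refine ⟨n, n, hn1, hn1, fun j hj => ?_⟩
  have hmem : (T ^ ((j + 1) * n)) x ∈ v := hn (j + 1) (by omega) (by omega)
  have heq : n + j * n = (j + 1) * n := by ring
  rw [Set.mem_setOf_eq, heq]
  exact hvU hmem
end
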